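/- arXiv:2303.16496 — 5 statements merged into one kernel-verified Lean document; each statement's English description precedes it below -/
import Mathlib

section
/- Let f : ℝ² → ℝ be a nonconstant polynomial and let J ⊆ ℝ be an interval which is unbounded above, such that f is a trivial topological fibre bundle over J. Assume that for some a ∈ J the fibre f⁻¹(a) has a compact connected component C. Then f⁻¹(a) = C (so f⁻¹(a) is compact and connected), every fibre f⁻¹(t) (t ∈ ℝ) is compact, and there exists b ∈ ℝ such that f⁻¹(t) = ∅ for all t < b. Symmetrically, if J is unbounded below instead, the same hypotheses imply f⁻¹(a) = C, all fibres of f are compact, and there exists b ∈ ℝ such that f⁻¹(t) = ∅ for all t > b. -/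
open MvPolynomial Filter Topology

noncomputable section

/-- Evaluation of a 2-variable polynomial at a point of `ℝ × ℝ`. -/
def fval (f : MvPolynomial (Fin 2) ℝ) (p : ℝ × ℝ) : ℝ :=
  MvPolynomial.eval ![p.1, p.2] f

/-- The gradient of (the polynomial function of) `f`. -/
def gradf (f : MvPolynomial (Fin 2) ℝ) (p : ℝ × ℝ) : ℝ × ℝ :=
  (fval (pderiv 0 f) p, fval (pderiv 1 f) p)

/-- `f` is a trivial topological fibre bundle over `J ⊆ ℝ`: there is a fibre `F` and a
homeomorphism `f⁻¹(J) ≃ₜ J × F` whose first component is `f`. -/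
def TrivialOver (f : MvPolynomial (Fin 2) ℝ) (J : Set ℝ) : Prop :=
  ∃ (F : Type) (_ : TopologicalSpace F) (Φ : (fval f ⁻¹' J) ≃ₜ (J × F)),
    ∀ q : (fval f ⁻¹' J), ((Φ q).1 : ℝ) = fval f q

lemma continuous_fval (f : MvPolynomial (Fin 2) ℝ) : Continuous (fval f) := by
  have h1 : Continuous fun p : ℝ × ℝ => (![p.1, p.2] : Fin 2 → ℝ) := by
    apply continuous_pi
    intro i
    fin_cases i
    · simpa using continuous_fst
    · simpa using continuous_snd
  exact (MvPolynomial.continuous_eval f).comp h1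

lemma isPreconnected_compl_closedBall_prod {R : ℝ} (hR : 0 ≤ R) :
    IsPreconnected ((Metric.closedBall (0 : ℝ × ℝ) R)ᶜ) := by
  have hrank : 1 < Module.rank ℝ (ℝ × ℝ) := by
    rw [rank_prod, Module.rank_self, Cardinal.lift_one]
    norm_num
  have hs : IsPreconnected ((Set.Ioi R) ×ˢ (Metric.sphere (0 : ℝ × ℝ) 1)) :=
    isPreconnected_Ioi.prod (isPreconnected_sphere hrank 0 1)
  have himg : (fun x : ℝ × (ℝ × ℝ) => x.1 • x.2) '' ((Set.Ioi R) ×ˢ (Metric.sphere (0 : ℝ × ℝ) 1))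
      = (Metric.closedBall (0 : ℝ × ℝ) R)ᶜ := by
    ext p
    constructor
    · rintro ⟨⟨r, v⟩, ⟨hr, hv⟩, rfl⟩
      have hv1 : ‖v‖ = 1 := by simpa using hv
      have hrR : R < r := hr
      simp only [Set.mem_compl_iff, Metric.mem_closedBall, dist_zero_right, not_le]
      rw [norm_smul, hv1, mul_one, Real.norm_eq_abs, abs_of_pos (lt_of_le_of_lt hR hrR)]
      exact hrR
    · intro hp
      have hpR : R < ‖p‖ := by
        simpa [Metric.mem_closedBall, dist_zero_right, not_le] using hp
      have hp0 : p ≠ 0 := by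
        intro h; rw [h, norm_zero] at hpR; linarith
      have hpn : ‖p‖ ≠ 0 := norm_ne_zero_iff.mpr hp0
      refine ⟨(‖p‖, ‖p‖⁻¹ • p), ⟨hpR, ?_⟩, ?_⟩
      · simp only [Metric.mem_sphere, dist_zero_right, norm_smul, norm_inv, norm_norm]
        exact inv_mul_cancel₀ hpn
      · show ‖p‖ • ‖p‖⁻¹ • p = p
        rw [smul_smul, mul_inv_cancel₀ hpn, one_smul]
  rw [← himg]
  exact hs.image _ (continuous_fst.smul continuous_snd).continuousOn

lemma bounded_or_compl_bounded {A : Set (ℝ × ℝ)} (hA : IsClosed A)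
    (hfr : Bornology.IsBounded (frontier A)) :
    Bornology.IsBounded A ∨ Bornology.IsBounded Aᶜ := by
  obtain ⟨r, hr⟩ := hfr.subset_closedBall 0
  have hr' : frontier A ⊆ Metric.closedBall 0 (max r 0) :=
    hr.trans (Metric.closedBall_subset_closedBall (le_max_left _ _))
  have hU : IsPreconnected ((Metric.closedBall (0 : ℝ × ℝ) (max r 0))ᶜ) :=
    isPreconnected_compl_closedBall_prod (le_max_right r 0)
  have hsub : (Metric.closedBall (0 : ℝ × ℝ) (max r 0))ᶜ ⊆ interior A ∪ Aᶜ := by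
    intro p hp
    by_cases hpA : p ∈ A
    · left
      have hpf : p ∉ frontier A := fun hf => hp (hr' hf)
      by_contra hint
      exact hpf (by rw [hA.frontier_eq]; exact ⟨hpA, hint⟩)
    · right; exact hpA
  have hdisj : Disjoint (interior A) Aᶜ :=
    Set.disjoint_left.mpr (fun p hp hpc => hpc (interior_subset hp))
  rcases hU.subset_or_subset isOpen_interior hA.isOpen_compl hdisj hsub with h | h
  · right
    apply Bornology.IsBounded.subset (Metric.isBounded_closedBall (x := (0 : ℝ × ℝ)) (r := max r 0))
    intro p hp
    by_contra hpc
    exact hp (interior_subset (h hpc))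
  · left
    apply Bornology.IsBounded.subset (Metric.isBounded_closedBall (x := (0 : ℝ × ℝ)) (r := max r 0))
    intro p hp
    by_contra hpc
    exact (h hpc) hp

lemma exists_clopen_compact (S : Set (ℝ × ℝ)) (hS : IsClosed S) (x : ℝ × ℝ) (hx : x ∈ S)
    (hC : IsCompact (connectedComponentIn S x)) :
    ∃ K U : Set (ℝ × ℝ), K.Nonempty ∧ IsCompact K ∧ IsOpen U ∧ K = U ∩ S := by
  classical
  set C := connectedComponentIn S x with hCdef
  have hxC : x ∈ C := mem_connectedComponentIn hx
  have hCS : C ⊆ S := connectedComponentIn_subset S x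
  obtain ⟨r, hrC⟩ := hC.isBounded.subset_closedBall 0
  set Y : Set (ℝ × ℝ) := Metric.closedBall 0 (r + 1) ∩ S with hYdef
  set Ω : Set (ℝ × ℝ) := Metric.ball (0 : ℝ × ℝ) (r + 1) with hΩdef
  have hCΩ : C ⊆ Ω := by
    intro z hz
    have : dist z 0 ≤ r := hrC hz
    show dist z 0 < r + 1
    linarith
  have hCY : C ⊆ Y := fun z hz => ⟨Metric.ball_subset_closedBall (hCΩ hz), hCS hz⟩
  have hYcomp : IsCompact Y := by
    apply Metric.isCompact_of_isClosed_isBounded (Metric.isClosed_closedBall.inter hS)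
    exact Metric.isBounded_closedBall.subset Set.inter_subset_left
  haveI : CompactSpace Y := isCompact_iff_compactSpace.mp hYcomp
  set x' : Y := ⟨x, hCY hxC⟩ with hx'def
  have hcompY : Subtype.val '' (connectedComponent x') = C := by
    apply Set.Subset.antisymm
    · have hpc : IsPreconnected (Subtype.val '' (connectedComponent x')) :=
        isPreconnected_connectedComponent.image _ continuous_subtype_val.continuousOn
      have hsub : Subtype.val '' (connectedComponent x') ⊆ S := by
        rintro _ ⟨q, _, rfl⟩; exact q.2.2
      have hxmem : x ∈ Subtype.val '' (connectedComponent x') :=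
        ⟨x', mem_connectedComponent, rfl⟩
      exact hpc.subset_connectedComponentIn hxmem hsub
    · intro z hz
      have hzY : z ∈ Y := hCY hz
      have hpre : IsPreconnected (Subtype.val ⁻¹' C : Set Y) := by
        apply (IsInducing.subtypeVal.isPreconnected_image).mp
        have himg : Subtype.val '' (Subtype.val ⁻¹' C : Set Y) = C := by
          rw [Subtype.image_preimage_coe]
          exact Set.inter_eq_self_of_subset_right hCY
        rw [himg]
        exact isPreconnected_connectedComponentIn
      have hx'' : x' ∈ (Subtype.val ⁻¹' C : Set Y) := hxC
      have := hpre.subset_connectedComponent hx''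
      exact ⟨⟨z, hzY⟩, this hz, rfl⟩
  set Ω' : Set Y := Subtype.val ⁻¹' Ω with hΩ'def
  have hΩ'open : IsOpen Ω' := Metric.isOpen_ball.preimage continuous_subtype_val
  have hccΩ : connectedComponent x' ⊆ Ω' := by
    intro q hq
    have : (q : ℝ × ℝ) ∈ C := by rw [← hcompY]; exact ⟨q, hq, rfl⟩
    exact hCΩ this
  have hempty : ((Ω')ᶜ ∩ ⋂ (Z : {Z : Set Y // IsClopen Z ∧ x' ∈ Z}), (Z : Set Y)) = ∅ := by
    rw [← connectedComponent_eq_iInter_isClopen x']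
    apply Set.eq_empty_of_forall_notMem
    rintro q ⟨hq1, hq2⟩
    exact hq1 (hccΩ hq2)
  obtain ⟨T, hT⟩ := (IsClosed.isCompact (isClosed_compl_iff.mpr hΩ'open)).elim_finite_subfamily_closed
    (fun Z : {Z : Set Y // IsClopen Z ∧ x' ∈ Z} => (Z : Set Y)) (fun Z => Z.2.1.isClosed) hempty
  set L : Set Y := ⋂ Z ∈ T, (Z : Set Y) with hLdef
  have hLclopen : IsClopen L := isClopen_biInter_finset (fun Z _ => Z.2.1)
  have hxL : x' ∈ L := Set.mem_biInter (fun Z _ => Z.2.2)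
  have hLΩ' : L ⊆ Ω' := by
    intro q hq
    by_contra hq'
    have hmem : q ∈ ((Ω')ᶜ ∩ ⋂ Z ∈ T, (Z : Set Y)) := ⟨hq', hq⟩
    rw [hT] at hmem
    exact hmem
  obtain ⟨O, hOopen, hOL⟩ := isOpen_induced_iff.mp hLclopen.isOpen
  refine ⟨Subtype.val '' L, O ∩ Ω, ⟨x, ⟨x', hxL, rfl⟩⟩,
    (hLclopen.isClosed.isCompact).image continuous_subtype_val,
    hOopen.inter Metric.isOpen_ball, ?_⟩
  apply Set.Subset.antisymm
  · rintro _ ⟨q, hqL, rfl⟩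
    refine ⟨⟨?_, hLΩ' hqL⟩, q.2.2⟩
    have : q ∈ Subtype.val ⁻¹' O := by rw [hOL]; exact hqL
    exact this
  · rintro p ⟨⟨hpO, hpΩ⟩, hpS⟩
    have hpY : p ∈ Y := ⟨Metric.ball_subset_closedBall hpΩ, hpS⟩
    refine ⟨⟨p, hpY⟩, ?_, rfl⟩
    rw [← hOL]
    exact hpO

lemma fiber_eq_clopen (g : ℝ × ℝ → ℝ) (hg : Continuous g) (J : Set ℝ)
    (F : Type) [TopologicalSpace F] (Φ : (g ⁻¹' J) ≃ₜ (J × F))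
    (hΦ : ∀ q : (g ⁻¹' J), ((Φ q).1 : ℝ) = g q)
    (a : ℝ) (ha : a ∈ J) (hray : Set.Ici a ⊆ J)
    (K : Set (ℝ × ℝ)) (hKne : K.Nonempty) (hKc : IsCompact K)
    (U : Set (ℝ × ℝ)) (hUo : IsOpen U) (hKU : K = U ∩ g ⁻¹' {a}) :
    g ⁻¹' {a} = K := by
  classical
  have hKsub : K ⊆ g ⁻¹' {a} := by rw [hKU]; exact Set.inter_subset_right
  have hval : ∀ (t : ℝ) (ht : t ∈ J) (y : F),
      g ((Φ.symm (⟨t, ht⟩, y) : (g ⁻¹' J : Set (ℝ × ℝ))) : ℝ × ℝ) = t := by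
    intro t ht y
    have h1 := hΦ (Φ.symm (⟨t, ht⟩, y))
    rw [Homeomorph.apply_symm_apply] at h1
    exact h1.symm
  set h : F → ℝ × ℝ := fun y => ((Φ.symm (⟨a, ha⟩, y) : (g ⁻¹' J : Set (ℝ × ℝ))) : ℝ × ℝ) with hhdef
  have hhc : Continuous h :=
    continuous_subtype_val.comp (Φ.symm.continuous.comp (continuous_const.prodMk continuous_id))
  have hgh : ∀ y, g (h y) = a := fun y => hval a ha y
  set FK : Set F := h ⁻¹' K with hFKdef
  have key1 : ∀ (q : (g ⁻¹' J : Set (ℝ × ℝ))), g (q : ℝ × ℝ) = a →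
      h ((Φ q).2) = (q : ℝ × ℝ) := by
    intro q hqa
    have h1 : (Φ q).1 = (⟨a, ha⟩ : J) := Subtype.ext (by rw [hΦ q]; exact hqa)
    calc h ((Φ q).2)
        = ((Φ.symm ((Φ q).1, (Φ q).2) : (g ⁻¹' J : Set (ℝ × ℝ))) : ℝ × ℝ) := by rw [h1]
      _ = (q : ℝ × ℝ) := by rw [Prod.mk.eta, Homeomorph.symm_apply_apply]
  have hFKclosed : IsClosed FK := hKc.isClosed.preimage hhc
  have hFKopen : IsOpen FK := by
    have hFKU : FK = h ⁻¹' U := by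
      ext y
      simp only [hFKdef, Set.mem_preimage]
      constructor
      · intro hy
        rw [hKU] at hy
        exact hy.1
      · intro hy
        rw [hKU]
        exact ⟨hy, hgh y⟩
    rw [hFKU]
    exact hUo.preimage hhc
  set G : Set (ℝ × ℝ) := {p | ∃ hp : p ∈ g ⁻¹' J, a ≤ g p ∧ (Φ ⟨p, hp⟩).2 ∈ FK} with hGdef
  have hGIci : G ⊆ g ⁻¹' (Set.Ici a) := by
    rintro p ⟨hp, h1, _⟩
    exact h1
  have hSclosed : IsClosed {q : (g ⁻¹' J : Set (ℝ × ℝ)) | a ≤ g (q : ℝ × ℝ) ∧ (Φ q).2 ∈ FK} := by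
    have h1 : IsClosed {q : (g ⁻¹' J : Set (ℝ × ℝ)) | a ≤ g (q : ℝ × ℝ)} :=
      isClosed_Ici.preimage (hg.comp continuous_subtype_val)
    have h2 : IsClosed {q : (g ⁻¹' J : Set (ℝ × ℝ)) | (Φ q).2 ∈ FK} :=
      hFKclosed.preimage (continuous_snd.comp Φ.continuous)
    exact h1.inter h2
  have hGim : G = Subtype.val '' {q : (g ⁻¹' J : Set (ℝ × ℝ)) | a ≤ g (q : ℝ × ℝ) ∧ (Φ q).2 ∈ FK} := by
    ext p
    constructor
    · rintro ⟨hp, h1, h2⟩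
      exact ⟨⟨p, hp⟩, ⟨h1, h2⟩, rfl⟩
    · rintro ⟨q, ⟨h1, h2⟩, rfl⟩
      exact ⟨q.2, h1, h2⟩
  have hGclosed : IsClosed G := by
    refine isClosed_of_closure_subset ?_
    intro p hp
    have hpIci : p ∈ g ⁻¹' (Set.Ici a) :=
      closure_minimal hGIci (isClosed_Ici.preimage hg) hp
    have hpJ : p ∈ g ⁻¹' J := hray hpIci
    have hcl : (⟨p, hpJ⟩ : (g ⁻¹' J : Set (ℝ × ℝ))) ∈
        closure {q : (g ⁻¹' J : Set (ℝ × ℝ)) | a ≤ g (q : ℝ × ℝ) ∧ (Φ q).2 ∈ FK} := by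
      rw [closure_subtype]
      rw [hGim] at hp
      exact hp
    have := hSclosed.closure_subset hcl
    rw [hGim]
    exact ⟨⟨p, hpJ⟩, this, rfl⟩
  have hfrK : frontier G ⊆ K := by
    intro p hp
    have hpG : p ∈ G := by
      have h1 : closure G = G := hGclosed.closure_eq
      rw [← h1]
      exact hp.1
    obtain ⟨hpJ, hpa, hpFK⟩ := hpG
    rcases eq_or_lt_of_le hpa with heq | hlt
    · have hk := key1 ⟨p, hpJ⟩ heq.symm
      have : h ((Φ ⟨p, hpJ⟩).2) ∈ K := hpFK
      rwa [hk] at this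
    · exfalso
      obtain ⟨O, hOopen, hOeq⟩ := isOpen_induced_iff.mp
        (hFKopen.preimage (continuous_snd.comp Φ.continuous) :
          IsOpen {q : (g ⁻¹' J : Set (ℝ × ℝ)) | (Φ q).2 ∈ FK})
      have hN : IsOpen (O ∩ g ⁻¹' (Set.Ioi a)) := hOopen.inter (isOpen_Ioi.preimage hg)
      have hpN : p ∈ O ∩ g ⁻¹' (Set.Ioi a) := by
        constructor
        · have : (⟨p, hpJ⟩ : (g ⁻¹' J : Set (ℝ × ℝ))) ∈ Subtype.val ⁻¹' O := by
            rw [hOeq]; exact hpFK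
          exact this
        · exact hlt
      have hNG : O ∩ g ⁻¹' (Set.Ioi a) ⊆ G := by
        rintro w ⟨hwO, hwa⟩
        have hwJ : w ∈ g ⁻¹' J := hray (Set.mem_Ici.mpr (le_of_lt hwa))
        refine ⟨hwJ, le_of_lt hwa, ?_⟩
        have : (⟨w, hwJ⟩ : (g ⁻¹' J : Set (ℝ × ℝ))) ∈ Subtype.val ⁻¹' O := hwO
        rw [hOeq] at this
        exact this
      exact hp.2 (mem_interior.mpr ⟨_, hNG, hN, hpN⟩)
  obtain ⟨z₀, hz₀⟩ := hKne
  have hz₀a : g z₀ = a := hKsub hz₀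
  have hz₀J : z₀ ∈ g ⁻¹' J := by
    show g z₀ ∈ J
    rw [hz₀a]; exact ha
  have hy₀ : ((Φ ⟨z₀, hz₀J⟩).2) ∈ FK := by
    have hk := key1 ⟨z₀, hz₀J⟩ hz₀a
    show h _ ∈ K
    rw [hk]; exact hz₀
  have hGsurj : ∀ t, a ≤ t → ∃ p ∈ G, g p = t := by
    intro t ht
    have htJ : t ∈ J := hray ht
    have hgq : g ((Φ.symm (⟨t, htJ⟩, (Φ ⟨z₀, hz₀J⟩).2) : (g ⁻¹' J : Set (ℝ × ℝ))) : ℝ × ℝ) = t :=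
      hval t htJ _
    refine ⟨((Φ.symm (⟨t, htJ⟩, (Φ ⟨z₀, hz₀J⟩).2) : (g ⁻¹' J : Set (ℝ × ℝ))) : ℝ × ℝ),
      ⟨(Φ.symm (⟨t, htJ⟩, (Φ ⟨z₀, hz₀J⟩).2)).2, ?_, ?_⟩, hgq⟩
    · rw [hgq]; exact ht
    · have heq : (⟨((Φ.symm (⟨t, htJ⟩, (Φ ⟨z₀, hz₀J⟩).2) : (g ⁻¹' J : Set (ℝ × ℝ))) : ℝ × ℝ),
          (Φ.symm (⟨t, htJ⟩, (Φ ⟨z₀, hz₀J⟩).2)).2⟩ : (g ⁻¹' J : Set (ℝ × ℝ)))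
          = Φ.symm (⟨t, htJ⟩, (Φ ⟨z₀, hz₀J⟩).2) := Subtype.ext rfl
      rw [heq, Homeomorph.apply_symm_apply]
      exact hy₀
  have hGnb : ¬ Bornology.IsBounded G := by
    intro hb
    obtain ⟨r, hr⟩ := hb.subset_closedBall 0
    obtain ⟨M, hM⟩ := ((isCompact_closedBall (0 : ℝ × ℝ) r).image_of_continuousOn
      hg.continuousOn).bddAbove
    obtain ⟨p, hpG, hpt⟩ := hGsurj (max a M + 1)
      (le_trans (le_max_left a M) (by linarith))
    have h1 : g p ≤ M := hM (Set.mem_image_of_mem g (hr hpG))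
    rw [hpt] at h1
    have h2 : M ≤ max a M := le_max_right a M
    linarith
  have hfrb : Bornology.IsBounded (frontier G) := hKc.isBounded.subset hfrK
  rcases bounded_or_compl_bounded hGclosed hfrb with hb | hb
  · exact absurd hb hGnb
  obtain ⟨R, hR⟩ := hb.subset_closedBall 0
  obtain ⟨M, hM⟩ := ((isCompact_closedBall (0 : ℝ × ℝ) R).image_of_continuousOn
    hg.continuousOn).bddAbove
  have ht₀a : a ≤ max a M + 1 := le_trans (le_max_left a M) (by linarith)
  have ht₀J : max a M + 1 ∈ J := hray ht₀a
  have hFKuniv : FK = Set.univ := by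
    rw [Set.eq_univ_iff_forall]
    intro y
    have hgq : g ((Φ.symm (⟨max a M + 1, ht₀J⟩, y) : (g ⁻¹' J : Set (ℝ × ℝ))) : ℝ × ℝ)
        = max a M + 1 := hval _ _ _
    have hqG : ((Φ.symm (⟨max a M + 1, ht₀J⟩, y) : (g ⁻¹' J : Set (ℝ × ℝ))) : ℝ × ℝ) ∈ G := by
      by_contra hqG
      have h1 := hR hqG
      have h2 : g _ ≤ M := hM (Set.mem_image_of_mem g h1)
      rw [hgq] at h2
      have h3 : M ≤ max a M := le_max_right a M
      linarith
    obtain ⟨hp, _, hFKmem⟩ := hqG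
    have heq : (⟨((Φ.symm (⟨max a M + 1, ht₀J⟩, y) : (g ⁻¹' J : Set (ℝ × ℝ))) : ℝ × ℝ), hp⟩ :
        (g ⁻¹' J : Set (ℝ × ℝ))) = Φ.symm (⟨max a M + 1, ht₀J⟩, y) := Subtype.ext rfl
    rw [heq, Homeomorph.apply_symm_apply] at hFKmem
    exact hFKmem
  apply Set.Subset.antisymm _ hKsub
  intro z hz
  have hza : g z = a := hz
  have hzJ : z ∈ g ⁻¹' J := by
    show g z ∈ J
    rw [hza]; exact ha
  have hmem : (Φ ⟨z, hzJ⟩).2 ∈ FK := by rw [hFKuniv]; trivial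
  have hk := key1 ⟨z, hzJ⟩ hza
  have : h ((Φ ⟨z, hzJ⟩).2) ∈ K := hmem
  rwa [hk] at this

lemma core_lemma (g : ℝ × ℝ → ℝ) (hg : Continuous g) (J : Set ℝ)
    (F : Type) [TopologicalSpace F] (Φ : (g ⁻¹' J) ≃ₜ (J × F))
    (hΦ : ∀ q : (g ⁻¹' J), ((Φ q).1 : ℝ) = g q)
    (a : ℝ) (ha : a ∈ J) (hray : Set.Ici a ⊆ J)
    (x : ℝ × ℝ) (hx : g x = a) (C₀ : Set (ℝ × ℝ)) (hCc : IsCompact C₀)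
    (hC₀ : C₀ = connectedComponentIn (g ⁻¹' {a}) x) :
    g ⁻¹' {a} = C₀ ∧ (∀ t : ℝ, IsCompact (g ⁻¹' {t})) ∧
      ∃ b : ℝ, ∀ t : ℝ, t < b → g ⁻¹' {t} = ∅ := by
  classical
  have hval : ∀ (t : ℝ) (ht : t ∈ J) (y : F),
      g ((Φ.symm (⟨t, ht⟩, y) : (g ⁻¹' J : Set (ℝ × ℝ))) : ℝ × ℝ) = t := by
    intro t ht y
    have h1 := hΦ (Φ.symm (⟨t, ht⟩, y))
    rw [Homeomorph.apply_symm_apply] at h1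
    exact h1.symm
  have hSclosed : IsClosed (g ⁻¹' {a}) := isClosed_singleton.preimage hg
  have hxS : x ∈ g ⁻¹' {a} := by
    show g x ∈ ({a} : Set ℝ)
    rw [hx]; exact Set.mem_singleton a
  obtain ⟨K, U, hKne, hKc, hUo, hKU⟩ := exists_clopen_compact _ hSclosed x hxS
    (by rw [← hC₀]; exact hCc)
  have hSK := fiber_eq_clopen g hg J F Φ hΦ a ha hray K hKne hKc U hUo hKU
  have hScomp : IsCompact (g ⁻¹' {a}) := by rw [hSK]; exact hKc
  haveI : CompactSpace (g ⁻¹' {a} : Set (ℝ × ℝ)) := isCompact_iff_compactSpace.mp hScomp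
  have hfib : g ⁻¹' {a} = C₀ := by
    set x' : (g ⁻¹' {a} : Set (ℝ × ℝ)) := ⟨x, hxS⟩ with hx'def
    have hZuniv : ∀ Z : {Z : Set (g ⁻¹' {a} : Set (ℝ × ℝ)) // IsClopen Z ∧ x' ∈ Z},
        (Z : Set (g ⁻¹' {a} : Set (ℝ × ℝ))) = Set.univ := by
      rintro ⟨Z, hZc, hZx⟩
      obtain ⟨O, hOopen, hOZ⟩ := isOpen_induced_iff.mp hZc.isOpen
      have h1 : IsCompact (Subtype.val '' Z) :=
        (hZc.isClosed.isCompact).image continuous_subtype_val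
      have h2 : Subtype.val '' Z = O ∩ g ⁻¹' {a} := by
        rw [← hOZ, Subtype.image_preimage_coe]
        exact Set.inter_comm _ _
      have h3 := fiber_eq_clopen g hg J F Φ hΦ a ha hray (Subtype.val '' Z)
        ⟨x, Set.mem_image_of_mem _ hZx⟩ h1 O hOopen h2
      rw [Set.eq_univ_iff_forall]
      intro q
      have hq : (q : ℝ × ℝ) ∈ Subtype.val '' Z := by rw [← h3]; exact q.2
      obtain ⟨q', hq', hqq⟩ := hq
      have : q' = q := Subtype.ext hqq
      rwa [← this]
    have hcc : connectedComponent x' = Set.univ := by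
      rw [connectedComponent_eq_iInter_isClopen x', Set.eq_univ_iff_forall]
      intro q
      rw [Set.mem_iInter]
      intro Z
      rw [hZuniv Z]
      trivial
    rw [hC₀, connectedComponentIn_eq_image hxS]
    have : (⟨x, hxS⟩ : (g ⁻¹' {a} : Set (ℝ × ℝ))) = x' := rfl
    rw [this, hcc, Set.image_univ, Subtype.range_coe]
  have hFcomp : CompactSpace F := by
    set ψ : (g ⁻¹' {a} : Set (ℝ × ℝ)) → F := fun w =>
      (Φ ⟨(w : ℝ × ℝ), (show g (w : ℝ × ℝ) ∈ J by
        have h := w.2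
        simp only [Set.mem_preimage, Set.mem_singleton_iff] at h
        rw [h]; exact ha)⟩).2 with hψdef
    have hψc : Continuous ψ :=
      continuous_snd.comp (Φ.continuous.comp (Continuous.subtype_mk continuous_subtype_val _))
    have hψsurj : Function.Surjective ψ := by
      intro y
      have hgq : g ((Φ.symm (⟨a, ha⟩, y) : (g ⁻¹' J : Set (ℝ × ℝ))) : ℝ × ℝ) = a := hval a ha y
      have hqmem : ((Φ.symm (⟨a, ha⟩, y) : (g ⁻¹' J : Set (ℝ × ℝ))) : ℝ × ℝ) ∈ g ⁻¹' {a} := by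
        show g _ ∈ ({a} : Set ℝ)
        rw [hgq]; exact Set.mem_singleton a
      refine ⟨⟨_, hqmem⟩, ?_⟩
      show (Φ ⟨_, _⟩).2 = y
      have heq : (⟨((Φ.symm (⟨a, ha⟩, y) : (g ⁻¹' J : Set (ℝ × ℝ))) : ℝ × ℝ), _⟩ :
          (g ⁻¹' J : Set (ℝ × ℝ))) = Φ.symm (⟨a, ha⟩, y) := Subtype.ext rfl
      rw [heq, Homeomorph.apply_symm_apply]
    exact ⟨hψsurj.range_eq ▸ isCompact_range hψc⟩
  have hfibt : ∀ t, a ≤ t → IsCompact (g ⁻¹' {t}) := by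
    intro t ht
    have htJ : t ∈ J := hray ht
    have hcont : Continuous fun y : F =>
        ((Φ.symm (⟨t, htJ⟩, y) : (g ⁻¹' J : Set (ℝ × ℝ))) : ℝ × ℝ) :=
      continuous_subtype_val.comp (Φ.symm.continuous.comp (continuous_const.prodMk continuous_id))
    have hrange : g ⁻¹' {t} = Set.range fun y : F =>
        ((Φ.symm (⟨t, htJ⟩, y) : (g ⁻¹' J : Set (ℝ × ℝ))) : ℝ × ℝ) := by
      ext z
      constructor
      · intro hz
        have hzt : g z = t := hz
        have hzJ : z ∈ g ⁻¹' J := by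
          show g z ∈ J
          rw [hzt]; exact htJ
        refine ⟨(Φ ⟨z, hzJ⟩).2, ?_⟩
        have h1 : (Φ ⟨z, hzJ⟩).1 = (⟨t, htJ⟩ : J) := Subtype.ext (by rw [hΦ]; exact hzt)
        show ((Φ.symm (⟨t, htJ⟩, (Φ ⟨z, hzJ⟩).2) : (g ⁻¹' J : Set (ℝ × ℝ))) : ℝ × ℝ) = z
        rw [← h1, Prod.mk.eta, Homeomorph.symm_apply_apply]
      · rintro ⟨y, rfl⟩
        show g _ ∈ ({t} : Set ℝ)
        rw [hval t htJ y]
        exact Set.mem_singleton t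
    rw [hrange]
    exact isCompact_range hcont
  have hA : IsClosed (g ⁻¹' (Set.Iic a)) := isClosed_Iic.preimage hg
  have hfr : frontier (g ⁻¹' (Set.Iic a)) ⊆ g ⁻¹' {a} := by
    intro p hp
    have h1 : g p ≤ a := by
      have := hp.1
      rw [hA.closure_eq] at this
      exact this
    have h2 : ¬ g p < a := by
      intro hlt
      have hsub : g ⁻¹' (Set.Iio a) ⊆ interior (g ⁻¹' (Set.Iic a)) :=
        interior_maximal (fun z hz => (le_of_lt hz : g z ≤ a)) (isOpen_Iio.preimage hg)
      exact hp.2 (hsub hlt)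
    show g p ∈ ({a} : Set ℝ)
    exact le_antisymm h1 (not_lt.mp h2)
  have hAcomp : IsCompact (g ⁻¹' (Set.Iic a)) := by
    rcases bounded_or_compl_bounded hA (hScomp.isBounded.subset hfr) with hb | hb
    · exact Metric.isCompact_of_isClosed_isBounded hA hb
    · exfalso
      obtain ⟨R, hR⟩ := hb.subset_closedBall 0
      obtain ⟨M, hM⟩ := ((isCompact_closedBall (0 : ℝ × ℝ) R).image_of_continuousOn
        hg.continuousOn).bddAbove
      have hxJ : x ∈ g ⁻¹' J := by
        show g x ∈ J
        rw [hx]; exact ha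
      have ht₀a : a ≤ max a M + 1 := le_trans (le_max_left a M) (by linarith)
      have hp₀ : g ((Φ.symm (⟨max a M + 1, hray ht₀a⟩, (Φ ⟨x, hxJ⟩).2) :
          (g ⁻¹' J : Set (ℝ × ℝ))) : ℝ × ℝ) = max a M + 1 := hval _ _ _
      have hp₀A : ((Φ.symm (⟨max a M + 1, hray ht₀a⟩, (Φ ⟨x, hxJ⟩).2) :
          (g ⁻¹' J : Set (ℝ × ℝ))) : ℝ × ℝ) ∉ g ⁻¹' (Set.Iic a) := by
        intro hmem
        have h1 : g _ ≤ a := hmem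
        rw [hp₀] at h1
        have := le_max_left a M
        linarith
      have h1 := hR hp₀A
      have h2 : g _ ≤ M := hM (Set.mem_image_of_mem g h1)
      rw [hp₀] at h2
      have := le_max_right a M
      linarith
  refine ⟨hfib, ?_, ?_⟩
  · intro t
    rcases le_or_gt a t with hle | hlt
    · exact hfibt t hle
    · refine hAcomp.of_isClosed_subset (isClosed_singleton.preimage hg) ?_
      intro z hz
      have hzt : g z = t := hz
      show g z ≤ a
      rw [hzt]
      exact le_of_lt hlt
  · rcases Set.eq_empty_or_nonempty (g ⁻¹' (Set.Iic a)) with hem | hne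
    · refine ⟨a, fun t ht => ?_⟩
      rw [Set.eq_empty_iff_forall_notMem]
      intro z hz
      have hzt : g z = t := hz
      have : z ∈ g ⁻¹' (Set.Iic a) := by
        show g z ≤ a
        rw [hzt]; linarith
      rw [hem] at this
      exact this
    · obtain ⟨p₀, hp₀A, hp₀min⟩ := hAcomp.exists_isMinOn hne hg.continuousOn
      refine ⟨g p₀, fun t ht => ?_⟩
      rw [Set.eq_empty_iff_forall_notMem]
      intro z hz
      have hzt : g z = t := hz
      have hp₀a : g p₀ ≤ a := hp₀A
      have hzA : z ∈ g ⁻¹' (Set.Iic a) := by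
        show g z ≤ a
        rw [hzt]; linarith
      have := isMinOn_iff.mp hp₀min z hzA
      rw [hzt] at this
      linarith

/-- if `f` is trivial over an interval `J` unbounded above (resp. below) and some
fibre over `J` has a compact connected component `C`, then that fibre equals `C`, all fibres of
`f` are compact, and the fibres are empty below (resp. above) some bound. -/
theorem stmt_0 (f : MvPolynomial (Fin 2) ℝ) (hf : ∀ c : ℝ, f ≠ MvPolynomial.C c)
    (J : Set ℝ) (hJ : J.OrdConnected) (htriv : TrivialOver f J)
    (a : ℝ) (ha : a ∈ J) (C₀ : Set (ℝ × ℝ)) (hC : IsCompact C₀)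
    (hcomp : ∃ x ∈ fval f ⁻¹' {a}, C₀ = connectedComponentIn (fval f ⁻¹' {a}) x) :
    (¬ BddAbove J →
      fval f ⁻¹' {a} = C₀ ∧ (∀ t : ℝ, IsCompact (fval f ⁻¹' {t})) ∧
        ∃ b : ℝ, ∀ t : ℝ, t < b → fval f ⁻¹' {t} = ∅) ∧
    (¬ BddBelow J →
      fval f ⁻¹' {a} = C₀ ∧ (∀ t : ℝ, IsCompact (fval f ⁻¹' {t})) ∧
        ∃ b : ℝ, ∀ t : ℝ, b < t → fval f ⁻¹' {t} = ∅) := by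
  obtain ⟨F, instF, Φ, hΦ⟩ := htriv
  obtain ⟨x, hx, hC₀⟩ := hcomp
  have hgc : Continuous (fval f) := continuous_fval f
  have hxa : fval f x = a := hx
  constructor
  · intro hJa
    have hray : Set.Ici a ⊆ J := by
      intro t ht
      obtain ⟨u, huJ, htu⟩ := not_bddAbove_iff.mp hJa t
      exact hJ.out ha huJ ⟨ht, le_of_lt htu⟩
    exact core_lemma (fval f) hgc J F Φ hΦ a ha hray x hxa C₀ hC hC₀
  · intro hJb
    set g : ℝ × ℝ → ℝ := fun p => - fval f p with hgdef
    have hgc' : Continuous g := hgc.neg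
    set J' : Set ℝ := Neg.neg '' J with hJ'def
    have hmem' : ∀ t : ℝ, t ∈ J' ↔ -t ∈ J := by
      intro t
      constructor
      · rintro ⟨u, hu, rfl⟩
        simpa using hu
      · intro hmt
        exact ⟨-t, hmt, by simp⟩
    have hpre : g ⁻¹' J' = fval f ⁻¹' J := by
      ext p
      rw [Set.mem_preimage, Set.mem_preimage, hmem']
      simp [hgdef]
    set e : (J : Set ℝ) ≃ₜ (J' : Set ℝ) :=
      { toEquiv :=
        { toFun := fun u => ⟨-(u : ℝ), (hmem' _).mpr (by rw [neg_neg]; exact u.2)⟩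
          invFun := fun v => ⟨-(v : ℝ), (hmem' _).mp v.2⟩
          left_inv := fun u => Subtype.ext (neg_neg _)
          right_inv := fun v => Subtype.ext (neg_neg _) }
        continuous_toFun := Continuous.subtype_mk (continuous_subtype_val.neg) _
        continuous_invFun := Continuous.subtype_mk (continuous_subtype_val.neg) _ } with hedef
    set Φ' : (g ⁻¹' J' : Set (ℝ × ℝ)) ≃ₜ (J' × F) :=
      (Homeomorph.setCongr hpre).trans (Φ.trans (e.prodCongr (Homeomorph.refl F))) with hΦ'def
    have hΦ' : ∀ q : (g ⁻¹' J' : Set (ℝ × ℝ)), ((Φ' q).1 : ℝ) = g q := by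
      intro q
      have h1 : ((Φ' q).1 : ℝ) = -((Φ ((Homeomorph.setCongr hpre) q)).1 : ℝ) := rfl
      rw [h1, hΦ]
      rfl
    have ha' : -a ∈ J' := (hmem' _).mpr (by rwa [neg_neg])
    have hray' : Set.Ici (-a) ⊆ J' := by
      intro t ht
      rw [hmem' t]
      have hta : -t ≤ a := by
        have : -a ≤ t := ht
        linarith
      rcases eq_or_lt_of_le hta with heq | hlt
      · rw [heq]; exact ha
      · obtain ⟨u, huJ, hut⟩ := not_bddBelow_iff.mp hJb (-t)
        exact hJ.out huJ ha ⟨le_of_lt hut, hta⟩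
    have hx' : g x = -a := by
      simp [hgdef, hxa]
    have hsetn : ∀ t : ℝ, g ⁻¹' {-t} = fval f ⁻¹' {t} := by
      intro t
      ext p
      simp only [Set.mem_preimage, Set.mem_singleton_iff, hgdef]
      constructor
      · intro hp; linarith
      · intro hp; rw [hp]
    have hC₀' : C₀ = connectedComponentIn (g ⁻¹' {-a}) x := by
      rw [hsetn a]; exact hC₀
    obtain ⟨h1, h2, b', hb'⟩ := core_lemma g hgc' J' F Φ' hΦ' (-a) ha' hray' x hx' C₀ hC hC₀'
    refine ⟨?_, ?_, ⟨-b', fun t ht => ?_⟩⟩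
    · rw [← hsetn a]; exact h1
    · intro t
      rw [← hsetn t]
      exact h2 (-t)
    · rw [← hsetn t]
      exact hb' (-t) (by linarith)
end
end

section
/- Let f : ℝ² → ℝ be a nonconstant polynomial. Then the set of points a = (a₁,a₂) ∈ ℝ² for which the polynomial (y−a₂)·∂f/∂x − (x−a₁)·∂f/∂y is not identically zero is dense in ℝ²; and for every such a, the Milnor set M_a(f) is an infinite subset of ℝ² with empty interior. -/
open MvPolynomial Filter Topology

noncomputable section

/-- The polynomial `(y - a₂)·∂f/∂x - (x - a₁)·∂f/∂y` whose zero set is the Milnor set `M_a(f)`. -/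
def milnorPoly (f : MvPolynomial (Fin 2) ℝ) (a : ℝ × ℝ) : MvPolynomial (Fin 2) ℝ :=
  (X 1 - C a.2) * pderiv 0 f - (X 0 - C a.1) * pderiv 1 f

/-- The Milnor set `M_a(f)`. -/
def milnorSet (f : MvPolynomial (Fin 2) ℝ) (a : ℝ × ℝ) : Set (ℝ × ℝ) :=
  {p | fval (milnorPoly f a) p = 0}

/-- The squared distance to `a`. -/
def rho (a : ℝ × ℝ) (p : ℝ × ℝ) : ℝ := (p.1 - a.1) ^ 2 + (p.2 - a.2) ^ 2

lemma fval_add (p q : MvPolynomial (Fin 2) ℝ) (x : ℝ × ℝ) :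
    fval (p + q) x = fval p x + fval q x := by simp [fval]

lemma fval_C (c : ℝ) (x : ℝ × ℝ) : fval (C c) x = c := by simp [fval]

lemma fval_mul (p q : MvPolynomial (Fin 2) ℝ) (x : ℝ × ℝ) :
    fval (p * q) x = fval p x * fval q x := by simp [fval]

lemma fval_X0 (x : ℝ × ℝ) : fval (X 0) x = x.1 := by simp [fval]
lemma fval_X1 (x : ℝ × ℝ) : fval (X 1) x = x.2 := by simp [fval]

/-- chain rule along a curve -/
lemma hasDerivAt_fval (f : MvPolynomial (Fin 2) ℝ) (u v : ℝ → ℝ) (u' v' : ℝ) (t : ℝ)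
    (hu : HasDerivAt u u' t) (hv : HasDerivAt v v' t) :
    HasDerivAt (fun s => fval f (u s, v s))
      (fval (pderiv 0 f) (u t, v t) * u' + fval (pderiv 1 f) (u t, v t) * v') t := by
  induction f using MvPolynomial.induction_on with
  | C c =>
    simp only [pderiv_C, fval_C]
    have : fval (0 : MvPolynomial (Fin 2) ℝ) (u t, v t) = 0 := by simp [fval]
    rw [this]; simpa using hasDerivAt_const t c
  | add p q hp hq =>
    simp only [map_add, fval_add]
    exact (hp.add hq).congr_deriv (by ring)
  | mul_X p n hp =>
    fin_cases n
    · simp only [Fin.zero_eta, Fin.mk_one]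
      have := hp.mul hu
      simp only [pderiv_mul, pderiv_X_self, pderiv_X_of_ne (show (1:Fin 2) ≠ 0 by decide),
        mul_one, mul_zero, add_zero, map_add, fval_add, fval_mul, fval_X0]
      exact (hp.mul hu).congr_deriv (by simp [fval]; ring)
    · simp only [Fin.zero_eta, Fin.mk_one]
      simp only [pderiv_mul, pderiv_X_self, pderiv_X_of_ne (show (0:Fin 2) ≠ 1 by decide),
        mul_one, mul_zero, add_zero, map_add, fval_add, fval_mul, fval_X1]
      exact (hp.mul hv).congr_deriv (by simp [fval]; ring)

lemma analytic_fval (f : MvPolynomial (Fin 2) ℝ) :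
    AnalyticOnNhd ℝ (fun p : ℝ × ℝ => fval f p) Set.univ := by
  induction f using MvPolynomial.induction_on with
  | C c => simpa [fval] using analyticOnNhd_const 
  | add p q hp hq => simpa only [fval_add, Pi.add_def] using hp.add hq
  | mul_X p n hp =>
    fin_cases n
    · have h1 : AnalyticOnNhd ℝ (fun p : ℝ × ℝ => p.1) Set.univ :=
        (ContinuousLinearMap.fst ℝ ℝ ℝ).analyticOnNhd _
      have := hp.mul h1
      have e : (fun x : ℝ × ℝ => fval (p * X 0) x) = (fun x => fval p x) * (fun x => x.1) := by
        ext x; simp [fval]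
      simp only [Fin.zero_eta]; rw [e]; exact this
    · have h1 : AnalyticOnNhd ℝ (fun p : ℝ × ℝ => p.2) Set.univ :=
        (ContinuousLinearMap.snd ℝ ℝ ℝ).analyticOnNhd _
      have e : (fun x : ℝ × ℝ => fval (p * X 1) x) = (fun x => fval p x) * (fun x => x.2) := by
        ext x; simp [fval]
      simp only [Fin.mk_one]; rw [e]; exact hp.mul h1

lemma fval_eq_zero_of_interior (q : MvPolynomial (Fin 2) ℝ) {s : Set (ℝ × ℝ)}
    (hs : ∀ p ∈ s, fval q p = 0) (hne : (interior s).Nonempty) : q = 0 := by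
  obtain ⟨z, hz⟩ := hne
  have hev : (fun p => fval q p) =ᶠ[𝓝 z] 0 := by
    filter_upwards [interior_mem_nhds.mpr (mem_interior_iff_mem_nhds.mp hz)] with p hp
    exact hs p (interior_subset hp)
  have := (analytic_fval q).eqOn_zero_of_preconnected_of_eventuallyEq_zero
    isPreconnected_univ (Set.mem_univ z) hev
  apply MvPolynomial.funext (q := 0)
  intro x
  have hx : (![x 0, x 1] : Fin 2 → ℝ) = x := by
    funext i; fin_cases i <;> rfl
  have := this (Set.mem_univ (x 0, x 1))
  simpa [fval, hx] using this


lemma fval_milnorPoly (f : MvPolynomial (Fin 2) ℝ) (a p : ℝ × ℝ) :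
    fval (milnorPoly f a) p =
      (p.2 - a.2) * fval (pderiv 0 f) p - (p.1 - a.1) * fval (pderiv 1 f) p := by
  simp [milnorPoly, fval]

lemma eq_C_of_pderiv (f : MvPolynomial (Fin 2) ℝ) (h0 : pderiv 0 f = 0) (h1 : pderiv 1 f = 0) :
    f = C (fval f (0, 0)) := by
  have key : ∀ p : ℝ × ℝ, fval f p = fval f (0, 0) := by
    intro p
    have hd : ∀ t : ℝ, HasDerivAt (fun s => fval f (p.1 * s, p.2 * s)) 0 t := by
      intro t
      have := hasDerivAt_fval f (fun s => p.1 * s) (fun s => p.2 * s) (p.1 * 1) (p.2 * 1) t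
        ((hasDerivAt_id t).const_mul p.1) ((hasDerivAt_id t).const_mul p.2)
      simpa [h0, h1, fval] using this
    have h := is_const_of_deriv_eq_zero (f := fun s => fval f (p.1 * s, p.2 * s))
      (fun t => (hd t).differentiableAt) (fun t => (hd t).deriv) 1 0
    simpa using h
  apply MvPolynomial.funext
  intro x
  have hx : (![x 0, x 1] : Fin 2 → ℝ) = x := by funext i; fin_cases i <;> rfl
  have := key (x 0, x 1)
  simp only [fval, hx] at this
  simpa [fval] using this

lemma circle_meets (f : MvPolynomial (Fin 2) ℝ) (a : ℝ × ℝ) {r : ℝ} (hr : 0 < r) :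
    ∃ p : ℝ × ℝ, p ∈ milnorSet f a ∧ rho a p = r ^ 2 := by
  set c : ℝ → ℝ × ℝ := fun θ => (a.1 + r * Real.cos θ, a.2 + r * Real.sin θ) with hc
  have hd : ∀ θ : ℝ, HasDerivAt (fun θ => fval f (c θ))
      (fval (pderiv 0 f) (c θ) * (0 + r * (-Real.sin θ)) +
       fval (pderiv 1 f) (c θ) * (0 + r * Real.cos θ)) θ := by
    intro θ
    exact hasDerivAt_fval f _ _ _ _ θ
      ((hasDerivAt_const θ a.1).add ((Real.hasDerivAt_cos θ).const_mul r))
      ((hasDerivAt_const θ a.2).add ((Real.hasDerivAt_sin θ).const_mul r))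
  obtain ⟨θ, hθmem, hθ⟩ := exists_hasDerivAt_eq_zero (f := fun θ => fval f (c θ))
    (f' := fun θ => fval (pderiv 0 f) (c θ) * (0 + r * (-Real.sin θ)) +
       fval (pderiv 1 f) (c θ) * (0 + r * Real.cos θ))
    (show (0:ℝ) < 2 * Real.pi by positivity)
    (fun x _ => ((hd x).continuousAt).continuousWithinAt)
    (by simp [hc]) (fun x _ => hd x)
  refine ⟨c θ, ?_, ?_⟩
  · show fval (milnorPoly f a) (c θ) = 0
    rw [fval_milnorPoly]
    simp only [hc] at hθ ⊢
    linear_combination -hθ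
  · simp only [rho, hc]
    ring_nf
    nlinarith [Real.sin_sq_add_cos_sq θ]


theorem stmt_3 (f : MvPolynomial (Fin 2) ℝ) (hf : ∀ c : ℝ, f ≠ MvPolynomial.C c) :
    Dense {a : ℝ × ℝ | milnorPoly f a ≠ 0} ∧
    ∀ a : ℝ × ℝ, milnorPoly f a ≠ 0 →
      (milnorSet f a).Infinite ∧ interior (milnorSet f a) = ∅ := by
  have hnot : pderiv 0 f ≠ 0 ∨ pderiv 1 f ≠ 0 := by
    by_contra hc
    push_neg at hc
    exact hf _ (eq_C_of_pderiv f hc.1 hc.2)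
  constructor
  · rw [Metric.dense_iff]
    intro a r hr
    by_cases h : milnorPoly f a ≠ 0
    · exact ⟨a, Metric.mem_ball_self hr, h⟩
    · push_neg at h
      rcases hnot with h0 | h1
      · refine ⟨(a.1, a.2 + r / 2), ?_, ?_⟩
        · rw [Metric.mem_ball, Prod.dist_eq]
          simp [Real.dist_eq, abs_of_pos, hr]
        · show milnorPoly f (a.1, a.2 + r / 2) ≠ 0
          have key : milnorPoly f (a.1, a.2 + r / 2) =
              milnorPoly f a - C (r / 2) * pderiv 0 f := by
            simp only [milnorPoly, map_add]
            ring
          rw [key, h, zero_sub, neg_ne_zero]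
          exact mul_ne_zero (by simpa using (by positivity : r / 2 ≠ 0)) h0
      · refine ⟨(a.1 + r / 2, a.2), ?_, ?_⟩
        · rw [Metric.mem_ball, Prod.dist_eq]
          simp [Real.dist_eq, abs_of_pos, hr]
        · show milnorPoly f (a.1 + r / 2, a.2) ≠ 0
          have key : milnorPoly f (a.1 + r / 2, a.2) =
              milnorPoly f a + C (r / 2) * pderiv 1 f := by
            simp only [milnorPoly, map_add]
            ring
          rw [key, h, zero_add]
          exact mul_ne_zero (by simpa using (by positivity : r / 2 ≠ 0)) h1
  · intro a ha
    constructor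
    · have H : ∀ n : ℕ, ∃ p, p ∈ milnorSet f a ∧ rho a p = ((n : ℝ) + 1) ^ 2 :=
        fun n => circle_meets f a (by positivity)
      choose g hmem hrho using H
      refine Set.infinite_of_injective_forall_mem (f := g) ?_ hmem
      intro m n hmn
      have : ((m : ℝ) + 1) ^ 2 = ((n : ℝ) + 1) ^ 2 := by rw [← hrho m, ← hrho n, hmn]
      have hmn' : (m : ℝ) = (n : ℝ) := by
        nlinarith [Nat.cast_nonneg (α := ℝ) m, Nat.cast_nonneg (α := ℝ) n]
      exact_mod_cast hmn'
    · by_contra h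
      rw [← ne_eq, ← Set.nonempty_iff_ne_empty] at h
      exact ha (fval_eq_zero_of_interior _ (fun p hp => hp) h)
end
end

section
/- Let f : ℝ² → ℝ be a polynomial of degree d ≥ 2 whose degree-d homogeneous part factors as f_d(x,y) = y^k·r(x,y), where k ≥ 1 and r is homogeneous of degree d−k with r(1,0) ≠ 0 (i.e. y does not divide r). Let h := y·∂f/∂x − x·∂f/∂y and let h_d be the degree-d homogeneous component of h. Then h_d ≠ 0 and the one-variable polynomial y ↦ h_d(1,y) vanishes at y = 0 to order exactly k−1. (This expresses that the intersection multiplicity at p = [1:0:0] of the projective closure of the complex Milnor set {h = 0} with the complex line at infinity equals d_p − 1, where d_p = k is the multiplicity of f_d at p.) -/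
open MvPolynomial Filter Topology

noncomputable section

lemma degree_add' (a b : Fin 2 →₀ ℕ) : (a + b).degree = a.degree + b.degree := by
  simp only [Finsupp.degree_eq_weight_one]; exact map_add _ a b

lemma degree_single' (j : Fin 2) : (Finsupp.single j 1).degree = 1 := by
  exact Finsupp.degree_single j 1

lemma isHom_X_mul_pderiv {p : MvPolynomial (Fin 2) ℝ} {n : ℕ} (hp : p.IsHomogeneous n)
    (i j : Fin 2) : ((X j : MvPolynomial (Fin 2) ℝ) * pderiv i p).IsHomogeneous n := by
  rw [p.as_sum, map_sum, Finset.mul_sum]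
  apply IsHomogeneous.sum
  intro v hv
  rw [pderiv_monomial]
  by_cases h0 : v i = 0
  · simp [h0]; exact isHomogeneous_zero _ _ _
  · have hle : Finsupp.single i 1 ≤ v :=
      Finsupp.single_le_iff.mpr (Nat.one_le_iff_ne_zero.mpr h0)
    have hv' : (v - Finsupp.single i 1) + Finsupp.single i 1 = v := tsub_add_cancel_of_le hle
    have hdeg : v.degree = n := by
      rw [Finsupp.degree_eq_weight_one]; exact hp (mem_support_iff.mp hv)
    have h2 : (v - Finsupp.single i 1).degree + 1 = n := by
      have := degree_add' (v - Finsupp.single i 1) (Finsupp.single i 1)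
      rw [hv', degree_single'] at this; omega
    rw [X, monomial_mul, one_mul]
    apply isHomogeneous_monomial
    rw [degree_add', degree_single']; omega

lemma hc_L (f : MvPolynomial (Fin 2) ℝ) (d : ℕ) (hdeg : f.totalDegree = d) :
    homogeneousComponent d (X 1 * pderiv 0 f - X 0 * pderiv 1 f)
      = X 1 * pderiv 0 (homogeneousComponent d f)
        - X 0 * pderiv 1 (homogeneousComponent d f) := by
  have key : ∀ i : ℕ, homogeneousComponent d
      (X 1 * pderiv 0 (homogeneousComponent i f) - X 0 * pderiv 1 (homogeneousComponent i f))
      = if d = i then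
          X 1 * pderiv 0 (homogeneousComponent i f) - X 0 * pderiv 1 (homogeneousComponent i f)
        else 0 := by
    intro i
    apply homogeneousComponent_of_mem
    rw [mem_homogeneousSubmodule]
    exact (isHom_X_mul_pderiv (homogeneousComponent_isHomogeneous i f) 0 1).sub
      (isHom_X_mul_pderiv (homogeneousComponent_isHomogeneous i f) 1 0)
  calc homogeneousComponent d (X 1 * pderiv 0 f - X 0 * pderiv 1 f)
      = ∑ i ∈ Finset.range (f.totalDegree + 1), homogeneousComponent d
          (X 1 * pderiv 0 (homogeneousComponent i f)
            - X 0 * pderiv 1 (homogeneousComponent i f)) := by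
        conv_lhs => rw [← f.sum_homogeneousComponent]
        rw [map_sum, map_sum, Finset.mul_sum, Finset.mul_sum, ← Finset.sum_sub_distrib, map_sum]
    _ = _ := by
        simp only [key]
        rw [Finset.sum_ite_eq]
        simp [hdeg]

lemma eval_zero_aeval (p : MvPolynomial (Fin 2) ℝ) :
    Polynomial.eval 0 (MvPolynomial.aeval ![(1 : Polynomial ℝ), Polynomial.X] p)
      = MvPolynomial.eval ![(1:ℝ), 0] p := by
  induction p using MvPolynomial.induction_on with
  | C a => simp [Polynomial.algebraMap_eq]
  | add p q hp hq => simp [hp, hq]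
  | mul_X p i hp => fin_cases i <;> simp [hp]

/-- if `f_d = y^k · r` with `k ≥ 1` and `r(1,0) ≠ 0`, then the degree-`d`
homogeneous component `h_d` of `h = y·f_x - x·f_y` is nonzero and `y ↦ h_d(1,y)` vanishes at
`0` to order exactly `k - 1`. -/
theorem stmt_5 (f : MvPolynomial (Fin 2) ℝ) (d k : ℕ) (hd : 2 ≤ d) (hk : 1 ≤ k)
    (hdeg : f.totalDegree = d)
    (r : MvPolynomial (Fin 2) ℝ) (hr : r.IsHomogeneous (d - k))
    (hr0 : MvPolynomial.eval ![(1:ℝ), 0] r ≠ 0)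
    (hfd : homogeneousComponent d f = X 1 ^ k * r) :
    homogeneousComponent d (X 1 * pderiv 0 f - X 0 * pderiv 1 f) ≠ 0 ∧
    (MvPolynomial.aeval ![(1 : Polynomial ℝ), Polynomial.X]
        (homogeneousComponent d (X 1 * pderiv 0 f - X 0 * pderiv 1 f)) : Polynomial ℝ) ≠ 0 ∧
    Polynomial.rootMultiplicity 0
      (MvPolynomial.aeval ![(1 : Polynomial ℝ), Polynomial.X]
        (homogeneousComponent d (X 1 * pderiv 0 f - X 0 * pderiv 1 f)) : Polynomial ℝ)
      = k - 1 := by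
  obtain ⟨m, rfl⟩ : ∃ m, k = m + 1 := ⟨k - 1, (Nat.succ_pred_eq_of_pos hk).symm⟩
  have hcomm := hc_L f d hdeg
  rw [hfd] at hcomm
  have hp0 : pderiv 0 (X 1 ^ (m+1) * r : MvPolynomial (Fin 2) ℝ)
      = X 1 ^ (m+1) * pderiv 0 r := by
    rw [pderiv_mul, Derivation.leibniz_pow, pderiv_X_of_ne (show (1:Fin 2) ≠ 0 by decide)]
    simp
  have hp1 : pderiv 1 (X 1 ^ (m+1) * r : MvPolynomial (Fin 2) ℝ)
      = ((m+1) • X 1 ^ m) * r + X 1 ^ (m+1) * pderiv 1 r := by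
    rw [pderiv_mul, Derivation.leibniz_pow, pderiv_X_self]
    simp
  rw [hp0, hp1] at hcomm
  set R : Polynomial ℝ := MvPolynomial.aeval ![(1 : Polynomial ℝ), Polynomial.X] r with hR
  set Rx : Polynomial ℝ :=
    MvPolynomial.aeval ![(1 : Polynomial ℝ), Polynomial.X] (pderiv 0 r) with hRx
  set Ry : Polynomial ℝ :=
    MvPolynomial.aeval ![(1 : Polynomial ℝ), Polynomial.X] (pderiv 1 r) with hRy
  set q : Polynomial ℝ :=
    Polynomial.X ^ 2 * Rx - ((m+1 : ℕ) : Polynomial ℝ) * R - Polynomial.X * Ry with hq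
  have hg : (MvPolynomial.aeval ![(1 : Polynomial ℝ), Polynomial.X]
      (homogeneousComponent d (X 1 * pderiv 0 f - X 0 * pderiv 1 f)) : Polynomial ℝ)
      = Polynomial.X ^ m * q := by
    rw [hcomm]
    simp only [map_sub, map_mul, map_add, map_pow, map_nsmul, aeval_X, Matrix.cons_val_one,
      Matrix.head_cons, Matrix.cons_val_zero, nsmul_eq_mul, hq, map_one, map_natCast,
      Nat.cast_add, Nat.cast_one]
    ring
  have hq0 : q.eval 0 = -((m:ℝ)+1) * MvPolynomial.eval ![(1:ℝ),0] r := by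
    simp [hq, hR, eval_zero_aeval]
    ring
  have hq0ne : q.eval 0 ≠ 0 := by
    rw [hq0]
    exact mul_ne_zero (neg_ne_zero.mpr (by positivity)) hr0
  have hqne : q ≠ 0 := fun h => hq0ne (by simp [h])
  have hgne : Polynomial.X ^ m * q ≠ 0 :=
    mul_ne_zero (pow_ne_zero _ Polynomial.X_ne_zero) hqne
  refine ⟨?_, by rw [hg]; exact hgne, ?_⟩
  · intro h
    exact hgne (by rw [← hg, h, map_zero])
  · rw [hg, Polynomial.rootMultiplicity_mul hgne]
    have h1 : Polynomial.rootMultiplicity 0 (Polynomial.X ^ m : Polynomial ℝ) = m := by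
      simpa using Polynomial.rootMultiplicity_X_sub_C_pow (0:ℝ) m
    have h2 : Polynomial.rootMultiplicity 0 q = 0 :=
      Polynomial.rootMultiplicity_eq_zero hq0ne
    rw [h1, h2]; omega
end
end

section
/- Let f : ℝ² → ℝ be a polynomial of degree d ≥ 2 whose degree-d homogeneous part factors as f_d = ℓ₁·ℓ₂^{d−1}, where ℓ₁ and ℓ₂ are non-proportional real linear forms in (x,y). Let q ∈ L∞ be the point at infinity determined by the direction on which ℓ₁ vanishes, and p ∈ L∞ the one determined by ℓ₂. Then q ∈ cl(ι(f⁻¹(0))); in particular L_f ≠ ∅. Moreover, if p ∈ L_f, then L_f = {p, q} and |L_f| = 2. -/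
open MvPolynomial Filter Topology

noncomputable section

abbrev P2 : Type := Projectivization ℝ (Fin 3 → ℝ)

/-- The quotient topology on the real projective plane. -/
instance : TopologicalSpace P2 :=
  inferInstanceAs (TopologicalSpace (Quotient (projectivizationSetoid ℝ (Fin 3 → ℝ))))

lemma vec_ne_zero (x y : ℝ) : ![x, y, (1:ℝ)] ≠ 0 := by
  intro h
  have h2 := congrFun h 2
  simp at h2

/-- The embedding `ℝ² → ℙ²(ℝ)`, `(x,y) ↦ [x:y:1]`. -/
def iota (p : ℝ × ℝ) : P2 :=
  Projectivization.mk ℝ ![p.1, p.2, 1] (vec_ne_zero p.1 p.2)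

/-- The line at infinity in `ℙ²(ℝ)`. -/
def Linf : Set P2 :=
  {P | ∃ (a b : ℝ) (h : ![a, b, (0:ℝ)] ≠ 0), P = Projectivization.mk ℝ ![a, b, 0] h}

/-- The set of points at infinity of the fibres of `f`. -/
def Lf (f : MvPolynomial (Fin 2) ℝ) : Set P2 :=
  ⋃ t : ℝ, closure (iota '' (fval f ⁻¹' {t})) ∩ Linf

namespace Stmt13Aux

lemma abs_eval_le (p : MvPolynomial (Fin 2) ℝ) (x : Fin 2 → ℝ) (M : ℝ) (hM : 1 ≤ M)
    (hx : ∀ i, |x i| ≤ M) :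
    |eval x p| ≤ (∑ m ∈ p.support, |coeff m p|) * M ^ p.totalDegree := by
  rw [eval_eq]
  refine le_trans (Finset.abs_sum_le_sum_abs _ _) ?_
  rw [Finset.sum_mul]
  refine Finset.sum_le_sum fun m hm => ?_
  calc |coeff m p * ∏ i ∈ m.support, x i ^ m i|
      = |coeff m p| * ∏ i ∈ m.support, |x i| ^ m i := by
        rw [abs_mul, Finset.abs_prod]
        simp [abs_pow]
    _ ≤ |coeff m p| * M ^ p.totalDegree := by
        refine mul_le_mul_of_nonneg_left ?_ (abs_nonneg _)
        calc ∏ i ∈ m.support, |x i| ^ m i ≤ ∏ i ∈ m.support, M ^ m i :=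
              Finset.prod_le_prod (fun i _ => pow_nonneg (abs_nonneg _) _)
                (fun i _ => pow_le_pow_left₀ (abs_nonneg _) (hx i) _)
          _ = M ^ (∑ i ∈ m.support, m i) := Finset.prod_pow_eq_pow_sum _ _ _
          _ ≤ M ^ p.totalDegree := pow_le_pow_right₀ hM (le_totalDegree hm)

lemma eval_smul_homog {n : ℕ} {p : MvPolynomial (Fin 2) ℝ} (hp : p.IsHomogeneous n)
    (c : ℝ) (x : Fin 2 → ℝ) : eval (c • x) p = c ^ n * eval x p := by
  rw [eval_eq, eval_eq, Finset.mul_sum]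
  refine Finset.sum_congr rfl fun m hm => ?_
  have hdeg : (∑ i ∈ m.support, m i) = n := by
    by_contra h
    exact mem_support_iff.mp hm (hp.coeff_eq_zero h)
  have : ∏ i ∈ m.support, (c • x) i ^ m i = c ^ n * ∏ i ∈ m.support, x i ^ m i := by
    simp only [Pi.smul_apply, smul_eq_mul, mul_pow, Finset.prod_mul_distrib,
      Finset.prod_pow_eq_pow_sum]
    rw [hdeg]
  rw [this]; ring

/-- Homogenization of `f` in degree `d`, as a function on `ℝ³`. -/
def Fh (f : MvPolynomial (Fin 2) ℝ) (d : ℕ) (v : Fin 3 → ℝ) : ℝ :=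
  ∑ i ∈ Finset.range (d + 1), v 2 ^ (d - i) * eval ![v 0, v 1] (homogeneousComponent i f)

lemma Fh_one (f : MvPolynomial (Fin 2) ℝ) (d : ℕ) (hdeg : f.totalDegree = d) (x y : ℝ) :
    Fh f d ![x, y, 1] = eval ![x, y] f := by
  have : ∑ i ∈ Finset.range (d + 1), homogeneousComponent i f = f := by
    rw [← hdeg]; exact sum_homogeneousComponent f
  have h2 : (![x, y, (1:ℝ)] : Fin 3 → ℝ) 2 = 1 := rfl
  have h0 : (![x, y, (1:ℝ)] : Fin 3 → ℝ) 0 = x := rfl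
  have hy : (![x, y, (1:ℝ)] : Fin 3 → ℝ) 1 = y := rfl
  rw [Fh]
  simp only [h2, h0, hy, one_pow, one_mul, ← map_sum, this]

lemma Fh_zero (f : MvPolynomial (Fin 2) ℝ) (d : ℕ) (a b : ℝ) :
    Fh f d ![a, b, 0] = eval ![a, b] (homogeneousComponent d f) := by
  rw [Fh, Finset.sum_eq_single d]
  · simp
  · intro i hi hne
    rw [Finset.mem_range] at hi
    have h2 : (![a, b, (0:ℝ)] : Fin 3 → ℝ) 2 = 0 := rfl
    rw [h2, zero_pow (by omega : d - i ≠ 0), zero_mul]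
  · intro h
    exact absurd (Finset.mem_range.mpr (by omega)) h

lemma Fh_smul (f : MvPolynomial (Fin 2) ℝ) (d : ℕ) (c : ℝ) (v : Fin 3 → ℝ) :
    Fh f d (c • v) = c ^ d * Fh f d v := by
  rw [Fh, Fh, Finset.mul_sum]
  refine Finset.sum_congr rfl fun i hi => ?_
  rw [Finset.mem_range] at hi
  have h1 : (![(c • v) 0, (c • v) 1] : Fin 2 → ℝ) = c • ![v 0, v 1] := by
    funext j; fin_cases j <;> simp
  rw [h1, eval_smul_homog (homogeneousComponent_isHomogeneous i f)]
  have : (c • v) 2 = c * v 2 := rfl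
  rw [this, mul_pow,
    show c ^ d = c ^ (d - i) * c ^ i from by rw [← pow_add]; congr 1; omega]
  ring

lemma continuous_Fh (f : MvPolynomial (Fin 2) ℝ) (d : ℕ) : Continuous (Fh f d) := by
  refine continuous_finset_sum _ fun i _ => ?_
  refine Continuous.mul (by fun_prop) ?_
  exact (MvPolynomial.continuous_eval _).comp (by
    refine continuous_pi fun j => ?_
    fin_cases j <;> exact continuous_apply _)

def Nrm (v : Fin 3 → ℝ) : ℝ := v 0 ^ 2 + v 1 ^ 2 + v 2 ^ 2

lemma continuous_Nrm : Continuous Nrm := by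
  unfold Nrm; fun_prop

lemma Nrm_pos {v : Fin 3 → ℝ} (hv : v ≠ 0) : 0 < Nrm v := by
  rcases lt_or_ge 0 (Nrm v) with h | h
  · exact h
  exfalso
  unfold Nrm at h
  have h0 : v 0 ^ 2 = 0 :=
    le_antisymm (by nlinarith [sq_nonneg (v 0), sq_nonneg (v 1), sq_nonneg (v 2)]) (sq_nonneg _)
  have h1 : v 1 ^ 2 = 0 :=
    le_antisymm (by nlinarith [sq_nonneg (v 0), sq_nonneg (v 1), sq_nonneg (v 2)]) (sq_nonneg _)
  have h2 : v 2 ^ 2 = 0 :=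
    le_antisymm (by nlinarith [sq_nonneg (v 0), sq_nonneg (v 1), sq_nonneg (v 2)]) (sq_nonneg _)
  rw [pow_eq_zero_iff two_ne_zero] at h0 h1 h2
  exact hv (funext fun i => by fin_cases i <;> assumption)

lemma Nrm_smul (c : ℝ) (v : Fin 3 → ℝ) : Nrm (c • v) = c ^ 2 * Nrm v := by
  simp only [Nrm, Pi.smul_apply, smul_eq_mul]; ring

/-- `φ([v]) = Fh(v)² / ‖v‖^{2d}`, a well-defined continuous function on `ℙ²`. -/
def phi (f : MvPolynomial (Fin 2) ℝ) (d : ℕ) : P2 → ℝ :=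
  fun P => Fh f d P.rep ^ 2 / Nrm P.rep ^ d

/-- `ψ([x:y:z]) = z² / ‖v‖²`. -/
def psi : P2 → ℝ := fun P => P.rep 2 ^ 2 / Nrm P.rep

lemma phi_mk (f : MvPolynomial (Fin 2) ℝ) (d : ℕ) (v : Fin 3 → ℝ) (hv : v ≠ 0) :
    phi f d (Projectivization.mk ℝ v hv) = Fh f d v ^ 2 / Nrm v ^ d := by
  obtain ⟨a, ha⟩ := Projectivization.exists_smul_eq_mk_rep ℝ v hv
  have ha' : (Projectivization.mk ℝ v hv).rep = (a : ℝ) • v := by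
    rw [← ha]; rfl
  have haa : (a : ℝ) ≠ 0 := a.ne_zero
  unfold phi
  rw [ha', Fh_smul, Nrm_smul, mul_pow, mul_pow, ← pow_mul, ← pow_mul, Nat.mul_comm d 2]
  exact mul_div_mul_left _ _ (pow_ne_zero _ haa)

lemma psi_mk (v : Fin 3 → ℝ) (hv : v ≠ 0) :
    psi (Projectivization.mk ℝ v hv) = v 2 ^ 2 / Nrm v := by
  obtain ⟨a, ha⟩ := Projectivization.exists_smul_eq_mk_rep ℝ v hv
  have ha' : (Projectivization.mk ℝ v hv).rep = (a : ℝ) • v := by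
    rw [← ha]; rfl
  have haa : (a : ℝ) ≠ 0 := a.ne_zero
  unfold psi
  rw [ha', Nrm_smul, show ((a : ℝ) • v) 2 = (a : ℝ) * v 2 from rfl, mul_pow]
  exact mul_div_mul_left _ _ (pow_ne_zero _ haa)

lemma continuous_phi (f : MvPolynomial (Fin 2) ℝ) (d : ℕ) : Continuous (phi f d) := by
  have hq : IsQuotientMap (fun u : {v : Fin 3 → ℝ // v ≠ 0} => (Quotient.mk'' u : P2)) :=
    isQuotientMap_quot_mk
  refine hq.continuous_iff.mpr
    (?_ : Continuous ((phi f d) ∘ (fun u : {v : Fin 3 → ℝ // v ≠ 0} => (Quotient.mk'' u : P2))))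
  have : (phi f d) ∘ (fun u : {v : Fin 3 → ℝ // v ≠ 0} => (Quotient.mk'' u : P2)) =
      fun u : {v : Fin 3 → ℝ // v ≠ 0} => Fh f d u.1 ^ 2 / Nrm u.1 ^ d := by
    funext u
    exact phi_mk f d u.1 u.2
  rw [this]
  exact (((continuous_Fh f d).comp continuous_subtype_val).pow 2).div
    ((continuous_Nrm.comp continuous_subtype_val).pow d)
    (fun u => pow_ne_zero _ (Nrm_pos u.2).ne')

lemma continuous_psi : Continuous psi := by
  have hq : IsQuotientMap (fun u : {v : Fin 3 → ℝ // v ≠ 0} => (Quotient.mk'' u : P2)) :=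
    isQuotientMap_quot_mk
  refine hq.continuous_iff.mpr
    (?_ : Continuous (psi ∘ (fun u : {v : Fin 3 → ℝ // v ≠ 0} => (Quotient.mk'' u : P2))))
  have : psi ∘ (fun u : {v : Fin 3 → ℝ // v ≠ 0} => (Quotient.mk'' u : P2)) =
      fun u : {v : Fin 3 → ℝ // v ≠ 0} => u.1 2 ^ 2 / Nrm u.1 := by
    funext u
    exact psi_mk u.1 u.2
  rw [this]
  exact (((continuous_apply 2).comp continuous_subtype_val).pow 2).div
    (continuous_Nrm.comp continuous_subtype_val)
    (fun u => (Nrm_pos u.2).ne')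

lemma key_vanish (f : MvPolynomial (Fin 2) ℝ) (d : ℕ) (hd : 2 ≤ d) (hdeg : f.totalDegree = d)
    (t a b : ℝ) (hab : ![a, b, (0:ℝ)] ≠ 0)
    (h : Projectivization.mk ℝ ![a, b, 0] hab ∈ closure (iota '' (fval f ⁻¹' {t}))) :
    eval ![a, b] (homogeneousComponent d f) = 0 := by
  set g : P2 → ℝ := fun P => phi f d P - t ^ 2 * psi P ^ d with hg
  have hcont : Continuous g :=
    (continuous_phi f d).sub (continuous_const.mul (continuous_psi.pow d))
  have hzero : iota '' (fval f ⁻¹' {t}) ⊆ g ⁻¹' {0} := by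
    rintro P ⟨⟨x, y⟩, hxy, rfl⟩
    have hfxy : fval f (x, y) = t := hxy
    have hN : (0:ℝ) < x ^ 2 + y ^ 2 + 1 := by positivity
    have hNv : Nrm ![x, y, 1] = x ^ 2 + y ^ 2 + 1 := by
      simp [Nrm, Matrix.cons_val_zero, Matrix.cons_val_one]
    simp only [Set.mem_preimage, Set.mem_singleton_iff, hg, iota]
    rw [phi_mk, psi_mk, Fh_one f d hdeg, hNv,
      show (![x, y, (1:ℝ)] : Fin 3 → ℝ) 2 = 1 from rfl,
      show eval ![x, y] f = t from hfxy]
    field_simp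
    have hNN : (x ^ 2 + y ^ 2 + 1) ^ d * (1 / (x ^ 2 + y ^ 2 + 1)) ^ d = 1 := by
      rw [← mul_pow, mul_one_div_cancel hN.ne', one_pow]
    rw [hNN]; ring
  have hgP : g (Projectivization.mk ℝ ![a, b, 0] hab) = 0 :=
    closure_minimal hzero (isClosed_singleton.preimage hcont) h
  have hpsi : psi (Projectivization.mk ℝ ![a, b, 0] hab) = 0 := by
    rw [psi_mk, show (![a, b, (0:ℝ)] : Fin 3 → ℝ) 2 = 0 from rfl]
    simp
  rw [hg] at hgP
  simp only [hpsi, zero_pow (by omega : d ≠ 0), mul_zero, sub_zero, phi_mk] at hgP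
  have hFh : Fh f d ![a, b, 0] = 0 := by
    have hN := pow_ne_zero d (Nrm_pos hab).ne'
    rcases div_eq_zero_iff.mp hgP with h' | h'
    · exact pow_eq_zero_iff two_ne_zero |>.mp h'
    · exact absurd h' hN
  rw [← Fh_zero f d a b]
  exact hFh

lemma mk_eq_of_orth (α β a b : ℝ) (hab : ![a, b, (0:ℝ)] ≠ 0) (hl : ![β, -α, (0:ℝ)] ≠ 0)
    (h : α * a + β * b = 0) :
    Projectivization.mk ℝ ![a, b, 0] hab = Projectivization.mk ℝ ![β, -α, 0] hl := by
  rw [Projectivization.mk_eq_mk_iff']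
  by_cases hβ : β = 0
  · have hα : α ≠ 0 := by
      intro hα
      exact hl (funext fun i => by fin_cases i <;> simp [hα, hβ])
    have ha0 : a = 0 := by
      have : α * a = 0 := by rw [hβ] at h; linarith
      exact (mul_eq_zero.mp this).resolve_left hα
    refine ⟨-b / α, funext fun i => ?_⟩
    fin_cases i
    · simp [hβ, ha0]
    · show (-b / α) * (-α) = b
      field_simp
    · simp
  · refine ⟨a / β, funext fun i => ?_⟩
    fin_cases i
    · show (a / β) * β = a
      field_simp
    · show (a / β) * (-α) = b
      field_simp
      linarith [h]
    · simp

lemma continuous_fval (f : MvPolynomial (Fin 2) ℝ) : Continuous (fval f) := by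
  unfold fval
  refine (MvPolynomial.continuous_eval f).comp (continuous_pi fun j => ?_)
  fin_cases j
  · exact continuous_fst
  · exact continuous_snd

lemma tendsto_mk {w : ℕ → Fin 3 → ℝ} {L : Fin 3 → ℝ} (hw : ∀ n, w n ≠ 0) (hL : L ≠ 0)
    (h : Tendsto w atTop (𝓝 L)) :
    Tendsto (fun n => Projectivization.mk ℝ (w n) (hw n)) atTop
      (𝓝 (Projectivization.mk ℝ L hL)) := by
  have hcq : Continuous (fun a : {x : Fin 3 → ℝ // x ≠ 0} => (Quotient.mk'' a : P2)) :=
    continuous_quot_mk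
  have hsub2 : Tendsto (fun n => (⟨w n, hw n⟩ : {x : Fin 3 → ℝ // x ≠ 0})) atTop
      (𝓝 ⟨L, hL⟩) := tendsto_subtype_rng.mpr h
  exact (hcq.tendsto _).comp hsub2

set_option maxHeartbeats 1000000 in
lemma exists_K (f : MvPolynomial (Fin 2) ℝ) (d : ℕ) (hd : 2 ≤ d) (hdeg : f.totalDegree = d)
    (a₁ b₁ a₂ b₂ : ℝ) (hnp : a₁ * b₂ - a₂ * b₁ ≠ 0)
    (hfd : homogeneousComponent d f =
      (C a₁ * X 0 + C b₁ * X 1) * (C a₂ * X 0 + C b₂ * X 1) ^ (d - 1)) :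
    ∃ K : ℝ, 1 ≤ K ∧ ∀ v : ℝ, K ≤ v → ∃ u : ℝ, |u| ≤ K ∧
      fval f ((b₂ * u - b₁ * v) / (a₁ * b₂ - a₂ * b₁),
              (a₁ * v - a₂ * u) / (a₁ * b₂ - a₂ * b₁)) = 0 := by
  obtain ⟨c, hc_def⟩ : ∃ c : ℝ, c = a₁ * b₂ - a₂ * b₁ := ⟨_, rfl⟩
  rw [← hc_def]
  have hc : c ≠ 0 := by rw [hc_def]; exact hnp
  have hc' : (0:ℝ) < |c| := abs_pos.mpr hc
  obtain ⟨R, hR_def⟩ : ∃ R : MvPolynomial (Fin 2) ℝ, R = f - homogeneousComponent d f := ⟨_, rfl⟩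
  have hRd : R.totalDegree ≤ d - 1 := by
    rw [MvPolynomial.totalDegree]
    apply Finset.sup_le
    intro m hm
    by_contra hlt
    push_neg at hlt
    have hd' : d ≤ m.sum fun _ e => e := by omega
    have hsum : (m.sum fun _ e => e) = ∑ i ∈ m.support, m i := rfl
    have hdegm : m.degree = m.sum fun _ e => e := rfl
    apply mem_support_iff.mp hm
    rw [hR_def, coeff_sub, coeff_homogeneousComponent]
    rcases eq_or_lt_of_le hd' with h | h
    · rw [if_pos (by rw [hdegm, ← h]), sub_self]
    · rw [if_neg (by rw [hdegm]; omega),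
        coeff_eq_zero_of_totalDegree_lt (by rw [hdeg, ← hsum]; exact h), sub_zero]
  have hfsplit : ∀ x y : ℝ, eval ![x, y] f =
      (a₁ * x + b₁ * y) * (a₂ * x + b₂ * y) ^ (d - 1) + eval ![x, y] R := by
    intro x y
    have hf : f = homogeneousComponent d f + R := by rw [hR_def]; ring
    conv_lhs => rw [hf]
    rw [map_add, hfd]
    simp [Matrix.cons_val_zero, Matrix.cons_val_one]
  have hsub : ∀ u v : ℝ,
      a₁ * ((b₂ * u - b₁ * v) / c) + b₁ * ((a₁ * v - a₂ * u) / c) = u ∧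
      a₂ * ((b₂ * u - b₁ * v) / c) + b₂ * ((a₁ * v - a₂ * u) / c) = v := by
    intro u v
    rw [hc_def]
    constructor <;> (rw [mul_div_assoc', mul_div_assoc', ← add_div, div_eq_iff hnp]; ring)
  obtain ⟨CR, hCR_def⟩ : ∃ CR : ℝ, CR = ∑ m ∈ R.support, |coeff m R| := ⟨_, rfl⟩
  have hCR0 : 0 ≤ CR := hCR_def ▸ Finset.sum_nonneg fun m _ => abs_nonneg _
  obtain ⟨A, hA_def⟩ : ∃ A : ℝ, A = (|a₁| + |a₂| + |b₁| + |b₂|) / |c| + 1 := ⟨_, rfl⟩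
  have hA1 : 1 ≤ A := by
    have h0 : 0 ≤ (|a₁| + |a₂| + |b₁| + |b₂|) / |c| := by positivity
    rw [hA_def]; linarith
  have hApow0 : (0:ℝ) ≤ CR * A ^ (d - 1) :=
    mul_nonneg hCR0 (pow_nonneg (by linarith) _)
  refine ⟨CR * A ^ (d - 1) + 1, by linarith, ?_⟩
  intro v hKv
  have hv1 : 1 ≤ v := by linarith
  have hv0 : 0 < v := by linarith
  -- remainder bound
  have hbnd : ∀ u : ℝ, |u| ≤ v →
      |eval ![(b₂ * u - b₁ * v) / c, (a₁ * v - a₂ * u) / c] R| ≤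
        CR * A ^ (d - 1) * v ^ (d - 1) := by
    intro u huv
    have hM : 1 ≤ A * v := by nlinarith
    have hx : ∀ i, |(![(b₂ * u - b₁ * v) / c, (a₁ * v - a₂ * u) / c] : Fin 2 → ℝ) i| ≤ A * v := by
      intro i
      have hb2 : |b₂ * u - b₁ * v| ≤ (|b₁| + |b₂|) * v := by
        calc |b₂ * u - b₁ * v| ≤ |b₂ * u| + |b₁ * v| := abs_sub _ _
          _ = |b₂| * |u| + |b₁| * |v| := by rw [abs_mul, abs_mul]
          _ ≤ (|b₁| + |b₂|) * v := by
              rw [abs_of_nonneg (by linarith : (0:ℝ) ≤ v)]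
              nlinarith [abs_nonneg b₁, abs_nonneg b₂, abs_nonneg u]
      have ha2 : |a₁ * v - a₂ * u| ≤ (|a₁| + |a₂|) * v := by
        calc |a₁ * v - a₂ * u| ≤ |a₁ * v| + |a₂ * u| := abs_sub _ _
          _ = |a₁| * |v| + |a₂| * |u| := by rw [abs_mul, abs_mul]
          _ ≤ (|a₁| + |a₂|) * v := by
              rw [abs_of_nonneg (by linarith : (0:ℝ) ≤ v)]
              nlinarith [abs_nonneg a₁, abs_nonneg a₂, abs_nonneg u]
      have hAc : (|a₁| + |a₂| + |b₁| + |b₂|) ≤ (A - 1) * |c| := by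
        rw [hA_def]
        field_simp
        linarith
      fin_cases i
      · show |(b₂ * u - b₁ * v) / c| ≤ A * v
        rw [abs_div, div_le_iff₀ hc']
        nlinarith [abs_nonneg a₁, abs_nonneg a₂, abs_nonneg (b₂ * u - b₁ * v)]
      · show |(a₁ * v - a₂ * u) / c| ≤ A * v
        rw [abs_div, div_le_iff₀ hc']
        nlinarith [abs_nonneg b₁, abs_nonneg b₂, abs_nonneg (a₁ * v - a₂ * u)]
    calc |eval ![(b₂ * u - b₁ * v) / c, (a₁ * v - a₂ * u) / c] R|
        ≤ (∑ m ∈ R.support, |coeff m R|) * (A * v) ^ R.totalDegree :=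
          abs_eval_le R _ (A * v) hM hx
      _ = CR * (A * v) ^ R.totalDegree := by rw [hCR_def]
      _ ≤ CR * (A * v) ^ (d - 1) :=
          mul_le_mul_of_nonneg_left (pow_le_pow_right₀ hM hRd) hCR0
      _ = CR * A ^ (d - 1) * v ^ (d - 1) := by rw [mul_pow]; ring
  -- value identity
  have hval : ∀ u : ℝ, fval f ((b₂ * u - b₁ * v) / c, (a₁ * v - a₂ * u) / c) =
      u * v ^ (d - 1) + eval ![(b₂ * u - b₁ * v) / c, (a₁ * v - a₂ * u) / c] R := by
    intro u
    show eval ![(b₂ * u - b₁ * v) / c, (a₁ * v - a₂ * u) / c] f = _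
    rw [hfsplit, (hsub u v).1, (hsub u v).2]
  have hpow : 0 < v ^ (d - 1) := pow_pos hv0 _
  have hcont : Continuous (fun u : ℝ =>
      fval f ((b₂ * u - b₁ * v) / c, (a₁ * v - a₂ * u) / c)) :=
    (continuous_fval f).comp (by fun_prop)
  have hhK : 0 < fval f ((b₂ * (CR * A ^ (d - 1) + 1) - b₁ * v) / c,
      (a₁ * v - a₂ * (CR * A ^ (d - 1) + 1)) / c) := by
    rw [hval]
    have hb := abs_le.mp (hbnd (CR * A ^ (d - 1) + 1)
      (by rwa [abs_of_nonneg (by linarith)]))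
    nlinarith [hb.1]
  have hhK' : fval f ((b₂ * (-(CR * A ^ (d - 1) + 1)) - b₁ * v) / c,
      (a₁ * v - a₂ * (-(CR * A ^ (d - 1) + 1))) / c) < 0 := by
    rw [hval]
    have hb := abs_le.mp (hbnd (-(CR * A ^ (d - 1) + 1))
      (by rw [abs_neg, abs_of_nonneg (by linarith)]; exact hKv))
    nlinarith [hb.2]
  have h0mem : (0:ℝ) ∈ Set.Icc
      (fval f ((b₂ * (-(CR * A ^ (d - 1) + 1)) - b₁ * v) / c,
        (a₁ * v - a₂ * (-(CR * A ^ (d - 1) + 1))) / c))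
      (fval f ((b₂ * (CR * A ^ (d - 1) + 1) - b₁ * v) / c,
        (a₁ * v - a₂ * (CR * A ^ (d - 1) + 1)) / c)) :=
    ⟨le_of_lt hhK', le_of_lt hhK⟩
  obtain ⟨u, hu, hu0⟩ := intermediate_value_Icc
    (by linarith : -(CR * A ^ (d - 1) + 1) ≤ CR * A ^ (d - 1) + 1)
    hcont.continuousOn h0mem
  exact ⟨u, abs_le.mpr ⟨hu.1, hu.2⟩, hu0⟩

set_option maxHeartbeats 1000000 in
lemma part1 (f : MvPolynomial (Fin 2) ℝ) (d : ℕ) (hd : 2 ≤ d) (hdeg : f.totalDegree = d)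
    (a₁ b₁ a₂ b₂ : ℝ) (hnp : a₁ * b₂ - a₂ * b₁ ≠ 0)
    (hfd : homogeneousComponent d f =
      (C a₁ * X 0 + C b₁ * X 1) * (C a₂ * X 0 + C b₂ * X 1) ^ (d - 1))
    (hq : ![b₁, -a₁, (0:ℝ)] ≠ 0) :
    Projectivization.mk ℝ ![b₁, -a₁, 0] hq ∈ closure (iota '' (fval f ⁻¹' {0})) := by
  obtain ⟨c, hc_def⟩ : ∃ c : ℝ, c = a₁ * b₂ - a₂ * b₁ := ⟨_, rfl⟩
  have hc : c ≠ 0 := by rw [hc_def]; exact hnp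
  obtain ⟨K, hK1, hKey⟩ := exists_K f d hd hdeg a₁ b₁ a₂ b₂ hnp hfd
  rw [← hc_def] at hKey
  have hvK : ∀ n : ℕ, K ≤ K + (n:ℝ) := fun n => le_add_of_nonneg_right (Nat.cast_nonneg n)
  have hv0 : ∀ n : ℕ, 0 < K + (n:ℝ) := fun n => lt_of_lt_of_le (by linarith) (hvK n)
  choose u hu hu0 using fun n : ℕ => hKey (K + (n:ℝ)) (hvK n)
  have hw_ne : ∀ n : ℕ, (![(b₂ * (u n / (K + (n:ℝ))) - b₁) / c,
      (a₁ - a₂ * (u n / (K + (n:ℝ)))) / c, 1 / (K + (n:ℝ))] : Fin 3 → ℝ) ≠ 0 := by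
    intro n hcon
    have h2 := congrFun hcon 2
    simp only [Matrix.cons_val_two, Matrix.tail_cons, Matrix.head_cons, Pi.zero_apply] at h2
    exact one_div_ne_zero (hv0 n).ne' h2
  have hiota : ∀ n : ℕ, iota ((b₂ * u n - b₁ * (K + (n:ℝ))) / c,
      (a₁ * (K + (n:ℝ)) - a₂ * u n) / c) = Projectivization.mk ℝ _ (hw_ne n) := by
    intro n
    unfold iota
    rw [Projectivization.mk_eq_mk_iff']
    refine ⟨K + (n:ℝ), funext fun i => ?_⟩
    have hvn := (hv0 n).ne'
    fin_cases i
    · show (K + (n:ℝ)) * ((b₂ * (u n / (K + (n:ℝ))) - b₁) / c) =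
        (b₂ * u n - b₁ * (K + (n:ℝ))) / c
      field_simp
    · show (K + (n:ℝ)) * ((a₁ - a₂ * (u n / (K + (n:ℝ)))) / c) =
        (a₁ * (K + (n:ℝ)) - a₂ * u n) / c
      field_simp
    · show (K + (n:ℝ)) * (1 / (K + (n:ℝ))) = 1
      field_simp
  have hvtop : Tendsto (fun n : ℕ => K + (n:ℝ)) atTop atTop :=
    tendsto_atTop_add_const_left _ K tendsto_natCast_atTop_atTop
  have huv : Tendsto (fun n => u n / (K + (n:ℝ))) atTop (𝓝 0) := by
    refine squeeze_zero_norm (fun n => ?_) (Tendsto.div_atTop (tendsto_const_nhds (x := K)) hvtop)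
    rw [Real.norm_eq_abs, abs_div, abs_of_pos (hv0 n)]
    exact div_le_div_of_nonneg_right (hu n) (hv0 n).le
  have hLne : (![-b₁ / c, a₁ / c, 0] : Fin 3 → ℝ) ≠ 0 := by
    intro hcon
    apply hq
    have h0 := congrFun hcon 0
    have h1 := congrFun hcon 1
    simp only [Matrix.cons_val_zero, Matrix.cons_val_one, Matrix.head_cons, Pi.zero_apply] at h0 h1
    have hb1 : b₁ = 0 := by
      field_simp at h0
      linarith
    have ha1 : a₁ = 0 := by
      field_simp at h1
      simpa using h1
    funext i
    fin_cases i <;> simp [hb1, ha1]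
  have hlim : Tendsto (fun n : ℕ => (![(b₂ * (u n / (K + (n:ℝ))) - b₁) / c,
      (a₁ - a₂ * (u n / (K + (n:ℝ)))) / c, 1 / (K + (n:ℝ))] : Fin 3 → ℝ)) atTop
      (𝓝 ![-b₁ / c, a₁ / c, 0]) := by
    rw [tendsto_pi_nhds]
    intro i
    fin_cases i
    · show Tendsto (fun n => (b₂ * (u n / (K + (n:ℝ))) - b₁) / c) atTop (𝓝 (-b₁ / c))
      have : Tendsto (fun n => (b₂ * (u n / (K + (n:ℝ))) - b₁) / c) atTop
          (𝓝 ((b₂ * 0 - b₁) / c)) :=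
        ((tendsto_const_nhds.mul huv).sub tendsto_const_nhds).div_const c
      simpa using this
    · show Tendsto (fun n => (a₁ - a₂ * (u n / (K + (n:ℝ)))) / c) atTop (𝓝 (a₁ / c))
      have : Tendsto (fun n => (a₁ - a₂ * (u n / (K + (n:ℝ)))) / c) atTop
          (𝓝 ((a₁ - a₂ * 0) / c)) :=
        (tendsto_const_nhds.sub (tendsto_const_nhds.mul huv)).div_const c
      simpa using this
    · show Tendsto (fun n : ℕ => 1 / (K + (n:ℝ))) atTop (𝓝 0)
      exact Tendsto.div_atTop tendsto_const_nhds hvtop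
  have hmkL : Projectivization.mk ℝ ![-b₁ / c, a₁ / c, 0] hLne =
      Projectivization.mk ℝ ![b₁, -a₁, 0] hq := by
    rw [Projectivization.mk_eq_mk_iff']
    refine ⟨-1 / c, funext fun i => ?_⟩
    fin_cases i
    · show (-1 / c) * b₁ = -b₁ / c
      ring
    · show (-1 / c) * (-a₁) = a₁ / c
      ring
    · show (-1 / c) * 0 = 0
      ring
  have htend : Tendsto (fun n : ℕ => iota ((b₂ * u n - b₁ * (K + (n:ℝ))) / c,
      (a₁ * (K + (n:ℝ)) - a₂ * u n) / c)) atTop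
      (𝓝 (Projectivization.mk ℝ ![b₁, -a₁, 0] hq)) := by
    rw [← hmkL]
    exact (tendsto_mk hw_ne hLne hlim).congr fun n => (hiota n).symm
  exact mem_closure_of_tendsto htend
    (Eventually.of_forall fun n => Set.mem_image_of_mem iota (hu0 n))
end Stmt13Aux

/-- if `f_d = ℓ₁ · ℓ₂^(d-1)` with `ℓ₁, ℓ₂` non-proportional real linear forms,
then the point at infinity `q` where `ℓ₁` vanishes lies in the closure of the zero fibre (so
`L_f ≠ ∅`), and if the point `p` where `ℓ₂` vanishes lies in `L_f`, then `L_f = {p, q}` and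
`|L_f| = 2`. -/
theorem stmt_13 (f : MvPolynomial (Fin 2) ℝ) (d : ℕ) (hd : 2 ≤ d)
    (hdeg : f.totalDegree = d)
    (a₁ b₁ a₂ b₂ : ℝ) (hnp : a₁ * b₂ - a₂ * b₁ ≠ 0)
    (hfd : homogeneousComponent d f =
      (C a₁ * X 0 + C b₁ * X 1) * (C a₂ * X 0 + C b₂ * X 1) ^ (d - 1))
    (hq : ![b₁, -a₁, (0:ℝ)] ≠ 0) (hp : ![b₂, -a₂, (0:ℝ)] ≠ 0) :
    Projectivization.mk ℝ ![b₁, -a₁, 0] hq ∈ closure (iota '' (fval f ⁻¹' {0})) ∧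
    (Lf f).Nonempty ∧
    (Projectivization.mk ℝ ![b₂, -a₂, 0] hp ∈ Lf f →
      Lf f = {Projectivization.mk ℝ ![b₂, -a₂, 0] hp,
              Projectivization.mk ℝ ![b₁, -a₁, 0] hq} ∧
      (Lf f).ncard = 2) := by
  have hq_cl := Stmt13Aux.part1 f d hd hdeg a₁ b₁ a₂ b₂ hnp hfd hq
  have hqLinf : Projectivization.mk ℝ ![b₁, -a₁, 0] hq ∈ Linf := ⟨b₁, -a₁, hq, rfl⟩
  have hqLf : Projectivization.mk ℝ ![b₁, -a₁, 0] hq ∈ Lf f :=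
    Set.mem_iUnion.mpr ⟨0, hq_cl, hqLinf⟩
  refine ⟨hq_cl, ⟨_, hqLf⟩, ?_⟩
  intro hpLf
  have hsubset : Lf f ⊆ {Projectivization.mk ℝ ![b₂, -a₂, 0] hp,
      Projectivization.mk ℝ ![b₁, -a₁, 0] hq} := by
    intro P hP
    rw [Lf, Set.mem_iUnion] at hP
    obtain ⟨t, hPcl, hPinf⟩ := hP
    obtain ⟨a, b, hab, rfl⟩ := hPinf
    have h0 := Stmt13Aux.key_vanish f d hd hdeg t a b hab hPcl
    rw [hfd] at h0
    have hfac : (a₁ * a + b₁ * b) * (a₂ * a + b₂ * b) ^ (d - 1) = 0 := by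
      simpa [Matrix.cons_val_zero, Matrix.cons_val_one] using h0
    simp only [Set.mem_insert_iff, Set.mem_singleton_iff]
    rcases mul_eq_zero.mp hfac with h | h
    · exact Or.inr (Stmt13Aux.mk_eq_of_orth a₁ b₁ a b hab hq h)
    · have h' : a₂ * a + b₂ * b = 0 := pow_eq_zero_iff (by omega : d - 1 ≠ 0) |>.mp h
      exact Or.inl (Stmt13Aux.mk_eq_of_orth a₂ b₂ a b hab hp h')
  have hne : Projectivization.mk ℝ ![b₂, -a₂, 0] hp ≠
      Projectivization.mk ℝ ![b₁, -a₁, 0] hq := by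
    intro hEq
    rw [Projectivization.mk_eq_mk_iff'] at hEq
    obtain ⟨s, hs⟩ := hEq
    have h0 := congrFun hs 0
    have h1 := congrFun hs 1
    have h0' : s * b₁ = b₂ := h0
    have h1' : s * (-a₁) = -a₂ := h1
    apply hnp
    linear_combination -a₁ * h0' - b₁ * h1'
  have heq : Lf f = {Projectivization.mk ℝ ![b₂, -a₂, 0] hp,
      Projectivization.mk ℝ ![b₁, -a₁, 0] hq} := by
    refine Set.Subset.antisymm hsubset ?_
    intro P hP
    rcases Set.mem_insert_iff.mp hP with rfl | hP'
    · exact hpLf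
    · rw [Set.mem_singleton_iff.mp hP']
      exact hqLf
  exact ⟨heq, by rw [heq]; exact Set.ncard_pair hne⟩
end
end

section
/- Let f(x,y) = v(x) + u(y), where u and v are one-variable real polynomials with deg u = d ≥ 3, deg v ≤ 2, and v' not identically zero. Then ∇f has finitely many zeros and |ind_∞(f)| ≤ 1, i.e. ind_∞(f) ∈ {−1, 0, 1}. -/
open MvPolynomial Filter Topology

noncomputable section

/-- The Euclidean norm on `ℝ × ℝ`. -/
def enorm2 (p : ℝ × ℝ) : ℝ := Real.sqrt (p.1 ^ 2 + p.2 ^ 2)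

/-- The closed Euclidean disk of radius `R` centred at the origin. -/
def Dbar (R : ℝ) : Set (ℝ × ℝ) := {p | enorm2 p ≤ R}

/-- `n` is the index at infinity of `f`: for any circle of radius `R` containing all the
zeros of `∇f`, every continuous angle-lift `θ` of the normalized gradient along the circle
satisfies `θ 1 - θ 0 = 2πn` (winding number of `∇f` on the circle). -/
def IsIndexAtInfinity (f : MvPolynomial (Fin 2) ℝ) (n : ℤ) : Prop :=
  ∀ R : ℝ, 0 < R → (∀ p : ℝ × ℝ, gradf f p = 0 → enorm2 p < R) →
    ∀ θ : ℝ → ℝ, ContinuousOn θ (Set.Icc 0 1) →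
      (∀ t ∈ Set.Icc (0:ℝ) 1,
        gradf f (R * Real.cos (2 * Real.pi * t), R * Real.sin (2 * Real.pi * t)) =
          enorm2 (gradf f (R * Real.cos (2 * Real.pi * t), R * Real.sin (2 * Real.pi * t))) •
            (Real.cos (θ t), Real.sin (θ t))) →
      θ 1 - θ 0 = 2 * Real.pi * n

section Aux
open Real
theorem pd_aeval (q : Polynomial ℝ) (i j : Fin 2) :
    pderiv i (Polynomial.aeval (X j : MvPolynomial (Fin 2) ℝ) q) =
      if i = j then Polynomial.aeval (X j : MvPolynomial (Fin 2) ℝ) (Polynomial.derivative q) else 0 := by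
  induction q using Polynomial.induction_on' with
  | add p q hp hq => rw [map_add, map_add, hp, hq]; split <;> simp
  | monomial n a =>
    by_cases h : i = j
    · subst h
      simp only [Polynomial.aeval_monomial, Polynomial.derivative_monomial, if_pos rfl,
        map_mul, Derivation.leibniz, pderiv_pow, pderiv_X, Pi.single_eq_same, pderiv_C,
        map_natCast, Polynomial.aeval_monomial]
      simp [smul_eq_mul]; ring
    · have h2 : ¬ j = i := fun hh => h hh.symm
      simp [Polynomial.aeval_monomial, pderiv_pow, pderiv_X, Pi.single_apply, h2, h]
theorem eval_aeval (q : Polynomial ℝ) (m : Fin 2 → ℝ) (j : Fin 2) :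
    MvPolynomial.eval m (Polynomial.aeval (X j : MvPolynomial (Fin 2) ℝ) q) = q.eval (m j) := by
  induction q using Polynomial.induction_on' with
  | add p q hp hq => simp [hp, hq]
  | monomial n a => simp [Polynomial.aeval_monomial]


set_option maxHeartbeats 1000000 in
theorem exists_lift (g1 g2 g1' g2' : ℝ → ℝ)
    (h1 : ∀ t, HasDerivAt g1 (g1' t) t) (h2 : ∀ t, HasDerivAt g2 (g2' t) t)
    (hc1 : Continuous g1') (hc2 : Continuous g2')
    (hnz : ∀ t, g1 t ^ 2 + g2 t ^ 2 ≠ 0) :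
    ∃ θ : ℝ → ℝ, Continuous θ ∧
      ∀ t, g1 t = Real.sqrt (g1 t ^ 2 + g2 t ^ 2) * Real.cos (θ t) ∧
           g2 t = Real.sqrt (g1 t ^ 2 + g2 t ^ 2) * Real.sin (θ t) := by
  set s : ℝ → ℝ := fun t => g1 t ^ 2 + g2 t ^ 2 with hs_def
  have hs : ∀ t, 0 < s t := fun t => lt_of_le_of_ne (by positivity) (Ne.symm (hnz t))
  have hcg1 : Continuous g1 := by
    rw [continuous_iff_continuousAt]; exact fun t => (h1 t).continuousAt
  have hcg2 : Continuous g2 := by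
    rw [continuous_iff_continuousAt]; exact fun t => (h2 t).continuousAt
  have hcs : Continuous s := by fun_prop
  set φ : ℝ → ℝ := fun t => (g1 t * g2' t - g2 t * g1' t) / s t with hφ_def
  have hφ : Continuous φ := by
    apply Continuous.div (by fun_prop) hcs (fun t => (hs t).ne')
  set r : ℝ → ℝ := fun t => Real.sqrt (s t) with hr_def
  have hr : ∀ t, 0 < r t := fun t => Real.sqrt_pos.mpr (hs t)
  have hr2 : ∀ t, r t ^ 2 = s t := fun t => Real.sq_sqrt (hs t).le
  have hcr : Continuous r := by fun_prop
  -- derivative of s and r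
  set s' : ℝ → ℝ := fun t => 2 * g1 t * g1' t + 2 * g2 t * g2' t with hs'_def
  have hds : ∀ t, HasDerivAt s (s' t) t := by
    intro t
    have := ((h1 t).pow 2).add ((h2 t).pow 2)
    refine this.congr_deriv (Eq.symm ?_); ring
  set r' : ℝ → ℝ := fun t => s' t / (2 * r t) with hr'_def
  have hdr : ∀ t, HasDerivAt r (r' t) t := by
    intro t
    have := (Real.hasDerivAt_sqrt (hs t).ne').comp t (hds t)
    refine this.congr_deriv (Eq.symm ?_)
    field_simp [hr'_def]
    show s' t / (2 * r t) * 2 = s' t / r t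
    have := (hr t).ne'
    field_simp
  -- angle
  set z : ℂ := ⟨g1 0 / r 0, g2 0 / r 0⟩ with hz_def
  have hzabs : ‖z‖ = 1 := by
    rw [Complex.norm_def, Complex.normSq_mk]
    rw [show g1 0 / r 0 * (g1 0 / r 0) + g2 0 / r 0 * (g2 0 / r 0)
        = (g1 0 ^ 2 + g2 0 ^ 2) / r 0 ^ 2 by ring]
    rw [hr2 0]
    simp [div_self (hs 0).ne']
    exact div_self (hs 0).ne'
  have hz0 : z ≠ 0 := by
    intro h; rw [h] at hzabs; simp at hzabs
  set θ₀ : ℝ := Complex.arg z with hθ₀_def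
  have hcos0 : Real.cos θ₀ = g1 0 / r 0 := by
    rw [hθ₀_def, Complex.cos_arg hz0, hzabs]; simp [hz_def]
  have hsin0 : Real.sin θ₀ = g2 0 / r 0 := by
    rw [hθ₀_def, Complex.sin_arg, hzabs]; simp [hz_def]
  set θ : ℝ → ℝ := fun t => θ₀ + ∫ τ in (0:ℝ)..t, φ τ with hθ_def
  have hdθ : ∀ t, HasDerivAt θ (φ t) t := by
    intro t
    exact ((hφ.integral_hasStrictDerivAt 0 t).hasDerivAt).const_add θ₀
  have hcθ : Continuous θ := by
    rw [continuous_iff_continuousAt]; exact fun t => (hdθ t).continuousAt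
  -- normalized curve
  set x : ℝ → ℝ := fun t => g1 t / r t with hx_def
  set y : ℝ → ℝ := fun t => g2 t / r t with hy_def
  have hunit : ∀ t, x t ^ 2 + y t ^ 2 = 1 := by
    intro t
    have h : r t ^ 2 = g1 t ^ 2 + g2 t ^ 2 := hr2 t
    have hrne : r t ≠ 0 := (hr t).ne'
    show (g1 t / r t) ^ 2 + (g2 t / r t) ^ 2 = 1
    field_simp
    linear_combination -h
  have hdx : ∀ t, HasDerivAt x (-(φ t) * y t) t := by
    intro t
    have := (h1 t).div (hdr t) (hr t).ne'
    refine this.congr_deriv (Eq.symm ?_)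
    rw [hy_def, hφ_def, hr'_def, hs'_def]
    have h2r : r t ≠ 0 := (hr t).ne'
    have hst : s t ≠ 0 := (hs t).ne'
    have h : r t ^ 2 = g1 t ^ 2 + g2 t ^ 2 := hr2 t
    show -((g1 t * g2' t - g2 t * g1' t) / s t) * (g2 t / r t) = _
    have hsg : s t = g1 t ^ 2 + g2 t ^ 2 := rfl
    rw [hsg]
    have hsg' : g1 t ^ 2 + g2 t ^ 2 ≠ 0 := hnz t
    field_simp
    linear_combination (g2 t ^ 2 * g1' t - g1 t * g2 t * g2' t - (g1 t ^ 2 + g2 t ^ 2) * g1' t) * h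
  have hdy : ∀ t, HasDerivAt y (φ t * x t) t := by
    intro t
    have := (h2 t).div (hdr t) (hr t).ne'
    refine this.congr_deriv (Eq.symm ?_)
    rw [hx_def, hφ_def, hr'_def, hs'_def]
    have h2r : r t ≠ 0 := (hr t).ne'
    have hst : s t ≠ 0 := (hs t).ne'
    have h : r t ^ 2 = g1 t ^ 2 + g2 t ^ 2 := hr2 t
    show (g1 t * g2' t - g2 t * g1' t) / s t * (g1 t / r t) = _
    have hsg : s t = g1 t ^ 2 + g2 t ^ 2 := rfl
    rw [hsg]
    have hsg' : g1 t ^ 2 + g2 t ^ 2 ≠ 0 := hnz t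
    field_simp
    linear_combination (g1 t ^ 2 * g2' t - g1 t * g2 t * g1' t - (g1 t ^ 2 + g2 t ^ 2) * g2' t) * h
  -- A and B constant
  set A : ℝ → ℝ := fun t => x t * Real.cos (θ t) + y t * Real.sin (θ t) with hA_def
  set B : ℝ → ℝ := fun t => y t * Real.cos (θ t) - x t * Real.sin (θ t) with hB_def
  have hdA : ∀ t, HasDerivAt A 0 t := by
    intro t
    have hcosθ : HasDerivAt (fun t => Real.cos (θ t)) (-Real.sin (θ t) * φ t) t :=
      (Real.hasDerivAt_cos (θ t)).comp t (hdθ t)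
    have hsinθ : HasDerivAt (fun t => Real.sin (θ t)) (Real.cos (θ t) * φ t) t :=
      (Real.hasDerivAt_sin (θ t)).comp t (hdθ t)
    have := ((hdx t).mul hcosθ).add ((hdy t).mul hsinθ)
    refine this.congr_deriv (Eq.symm ?_)
    ring
  have hdB : ∀ t, HasDerivAt B 0 t := by
    intro t
    have hcosθ : HasDerivAt (fun t => Real.cos (θ t)) (-Real.sin (θ t) * φ t) t :=
      (Real.hasDerivAt_cos (θ t)).comp t (hdθ t)
    have hsinθ : HasDerivAt (fun t => Real.sin (θ t)) (Real.cos (θ t) * φ t) t :=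
      (Real.hasDerivAt_sin (θ t)).comp t (hdθ t)
    have := ((hdy t).mul hcosθ).sub ((hdx t).mul hsinθ)
    refine this.congr_deriv (Eq.symm ?_)
    ring
  have hθ00 : θ 0 = θ₀ := by simp [hθ_def]
  have hAconst : ∀ t, A t = 1 := by
    intro t
    have h0 : A t = A 0 :=
      is_const_of_deriv_eq_zero (fun t => (hdA t).differentiableAt)
        (fun t => (hdA t).deriv) t 0
    rw [h0]
    show x 0 * Real.cos (θ 0) + y 0 * Real.sin (θ 0) = 1
    rw [hθ00, hcos0, hsin0]
    show g1 0 / r 0 * (g1 0 / r 0) + g2 0 / r 0 * (g2 0 / r 0) = 1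
    have h : r 0 ^ 2 = g1 0 ^ 2 + g2 0 ^ 2 := hr2 0
    have h0' : r 0 ≠ 0 := (hr 0).ne'
    field_simp
    linear_combination -h
  have hBconst : ∀ t, B t = 0 := by
    intro t
    have h0 : B t = B 0 :=
      is_const_of_deriv_eq_zero (fun t => (hdB t).differentiableAt)
        (fun t => (hdB t).deriv) t 0
    rw [h0]
    show y 0 * Real.cos (θ 0) - x 0 * Real.sin (θ 0) = 0
    rw [hθ00, hcos0, hsin0]
    show g2 0 / r 0 * (g1 0 / r 0) - g1 0 / r 0 * (g2 0 / r 0) = 0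
    ring
  refine ⟨θ, hcθ, fun t => ?_⟩
  have hA1 : x t * Real.cos (θ t) + y t * Real.sin (θ t) = 1 := hAconst t
  have hB0 : y t * Real.cos (θ t) - x t * Real.sin (θ t) = 0 := hBconst t
  have hu := hunit t
  have hpyth := Real.sin_sq_add_cos_sq (θ t)
  have hsq : (x t - Real.cos (θ t)) ^ 2 + (y t - Real.sin (θ t)) ^ 2 = 0 := by
    linear_combination hu + hpyth - 2 * hA1
  obtain ⟨e1', e2'⟩ := (add_eq_zero_iff_of_nonneg (sq_nonneg _) (sq_nonneg _)).mp hsq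
  have hx_eq : x t = Real.cos (θ t) :=
    sub_eq_zero.mp (pow_eq_zero_iff (two_ne_zero) |>.mp e1')
  have hy_eq : y t = Real.sin (θ t) :=
    sub_eq_zero.mp (pow_eq_zero_iff (two_ne_zero) |>.mp e2')
  have e1 : Real.sqrt (g1 t ^ 2 + g2 t ^ 2) = r t := rfl
  constructor
  · rw [e1, ← hx_eq]
    show g1 t = r t * (g1 t / r t)
    rw [mul_comm, div_mul_cancel₀ _ (hr t).ne']
  · rw [e1, ← hy_eq]
    show g2 t = r t * (g2 t / r t)
    rw [mul_comm, div_mul_cancel₀ _ (hr t).ne']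


theorem no_interval_cos_nonneg {α β : ℝ} (hlen : Real.pi < β - α)
    (h : ∀ x ∈ Set.Icc α β, 0 ≤ Real.cos x) : False := by
  have hπ := Real.pi_pos
  set k : ℤ := ⌊(α + π) / (2 * π)⌋ with hk_def
  have h2π : (0:ℝ) < 2 * π := by linarith
  have hk1 : (k : ℝ) ≤ (α + π) / (2 * π) := Int.floor_le _
  have hk2 : (α + π) / (2 * π) < k + 1 := Int.lt_floor_add_one _
  have hr1 : -π ≤ α - k * (2 * π) := by
    have := (le_div_iff₀ h2π).mp hk1
    linarith
  have hr2 : α - k * (2 * π) < π := by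
    have := (div_lt_iff₀ h2π).mp hk2
    linarith
  set r : ℝ := α - k * (2 * π) with hr_def
  have hcosr : 0 ≤ Real.cos r := by
    have : Real.cos r = Real.cos α := by
      rw [hr_def, Real.cos_sub_int_mul_two_pi]
    rw [this]
    exact h α ⟨le_refl _, by linarith⟩
  -- cos r ≥ 0 and r ∈ [-π, π) imply |r| ≤ π/2
  have hrle : r ≤ π / 2 := by
    by_contra hcon
    push_neg at hcon
    have : Real.cos r < 0 := Real.cos_neg_of_pi_div_two_lt_of_lt hcon (by linarith)
    linarith
  have hrge : -(π / 2) ≤ r := by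
    by_contra hcon
    push_neg at hcon
    have : Real.cos (-r) < 0 :=
      Real.cos_neg_of_pi_div_two_lt_of_lt (by linarith) (by linarith)
    rw [Real.cos_neg] at this
    linarith
  -- pick a bad point
  have hαk : α ≤ k * (2 * π) + π / 2 := by rw [hr_def] at hrle; linarith
  have hβk : k * (2 * π) + π / 2 < β := by linarith
  by_cases hcase : k * (2 * π) + π ≤ β
  · have hx := h (k * (2 * π) + π) ⟨by linarith, hcase⟩
    have : Real.cos (k * (2 * π) + π) = -1 := by
      rw [show k * (2*π) + π = π + k * (2*π) by ring, Real.cos_add_int_mul_two_pi, Real.cos_pi]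
    rw [this] at hx
    linarith
  · push_neg at hcase
    have hx := h β ⟨by linarith, le_refl _⟩
    have hβr : Real.cos β = Real.cos (β - k * (2 * π)) := by
      rw [Real.cos_sub_int_mul_two_pi]
    have : Real.cos (β - k * (2 * π)) < 0 :=
      Real.cos_neg_of_pi_div_two_lt_of_lt (by linarith) (by linarith)
    rw [hβr] at hx
    linarith

theorem angle_var_le_pi_nonneg {θ : ℝ → ℝ} {s t : ℝ} (hst : s ≤ t)
    (hθ : ContinuousOn θ (Set.Icc s t))
    (h : ∀ τ ∈ Set.Icc s t, 0 ≤ Real.cos (θ τ)) : |θ t - θ s| ≤ π := by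
  by_contra hcon
  push_neg at hcon
  rcases abs_cases (θ t - θ s) with ⟨he, _⟩ | ⟨he, _⟩
  · rw [he] at hcon
    have hsub := intermediate_value_Icc hst hθ
    exact no_interval_cos_nonneg hcon (fun x hx => by
      obtain ⟨τ, hτ, hτx⟩ := hsub hx
      rw [← hτx]; exact h τ hτ)
  · rw [he] at hcon
    have hsub := intermediate_value_Icc' hst hθ
    have hcon' : π < θ s - θ t := by linarith
    exact no_interval_cos_nonneg hcon' (fun x hx => by
      obtain ⟨τ, hτ, hτx⟩ := hsub hx
      rw [← hτx]; exact h τ hτ)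

theorem angle_var_le_pi {θ : ℝ → ℝ} {s t : ℝ} (hst : s ≤ t)
    (hθ : ContinuousOn θ (Set.Icc s t)) {k : ℝ} (hk : k ≠ 0)
    (h : ∀ τ ∈ Set.Icc s t, 0 ≤ k * Real.cos (θ τ)) : |θ t - θ s| ≤ π := by
  rcases hk.lt_or_gt with hneg | hpos
  · have : |(θ t + π) - (θ s + π)| ≤ π := by
      apply angle_var_le_pi_nonneg hst (hθ.add continuousOn_const)
      intro τ hτ
      show 0 ≤ Real.cos (θ τ + π)
      rw [Real.cos_add_pi]
      nlinarith [h τ hτ]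
    simpa using this
  · apply angle_var_le_pi_nonneg hst hθ
    intro τ hτ
    nlinarith [h τ hτ]


set_option maxHeartbeats 1000000 in
theorem stmt15_aux_main (u v : Polynomial ℝ) (d : ℕ) (hd : 3 ≤ d) (hu : u.natDegree = d)
    (hv : v.natDegree ≤ 2) (hv' : Polynomial.derivative v ≠ 0) :
    {p : ℝ × ℝ | gradf (Polynomial.aeval (X 0 : MvPolynomial (Fin 2) ℝ) v +
        Polynomial.aeval (X 1 : MvPolynomial (Fin 2) ℝ) u) p = 0}.Finite ∧
    ∀ n : ℤ, IsIndexAtInfinity (Polynomial.aeval (X 0 : MvPolynomial (Fin 2) ℝ) v +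
        Polynomial.aeval (X 1 : MvPolynomial (Fin 2) ℝ) u) n → |n| ≤ 1 := by

  classical
  have hπ := Real.pi_pos
  set f : MvPolynomial (Fin 2) ℝ :=
    Polynomial.aeval (X 0 : MvPolynomial (Fin 2) ℝ) v +
      Polynomial.aeval (X 1 : MvPolynomial (Fin 2) ℝ) u with hf
  set P : Polynomial ℝ := Polynomial.derivative v with hPdef
  set Q : Polynomial ℝ := Polynomial.derivative u with hQdef
  have hQ : Q ≠ 0 := by
    intro h0
    have := Polynomial.natDegree_eq_zero_of_derivative_eq_zero h0
    omega
  have grad_eq : ∀ p : ℝ × ℝ, gradf f p = (P.eval p.1, Q.eval p.2) := by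
    intro p
    have e0 : pderiv (0 : Fin 2) f = Polynomial.aeval (X 0 : MvPolynomial (Fin 2) ℝ) P := by
      rw [hf, map_add, pd_aeval v 0 0, pd_aeval u 0 1]
      simp
      rfl
    have e1 : pderiv (1 : Fin 2) f = Polynomial.aeval (X 1 : MvPolynomial (Fin 2) ℝ) Q := by
      rw [hf, map_add, pd_aeval v 1 0, pd_aeval u 1 1]
      simp
      rfl
    show (fval (pderiv 0 f) p, fval (pderiv 1 f) p) = _
    rw [e0, e1]
    show (MvPolynomial.eval ![p.1, p.2] _, MvPolynomial.eval ![p.1, p.2] _) = _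
    rw [eval_aeval, eval_aeval]
    simp
  -- finiteness
  have hfin : {p : ℝ × ℝ | gradf f p = 0}.Finite := by
    apply Set.Finite.subset
      ((Polynomial.finite_setOf_isRoot hv').prod (Polynomial.finite_setOf_isRoot hQ))
    intro p hp
    simp only [Set.mem_setOf_eq, grad_eq, Prod.ext_iff, Prod.fst_zero, Prod.snd_zero] at hp
    exact ⟨hp.1, hp.2⟩
  refine ⟨hfin, ?_⟩
  intro n hn
  -- the linear polynomial P
  set a : ℝ := P.coeff 1 with ha_def
  set b : ℝ := P.coeff 0 with hb_def
  have hdegP : P.natDegree < 2 := by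
    have h1 : P.natDegree ≤ v.natDegree - 1 := Polynomial.natDegree_derivative_le v
    omega
  have heval : ∀ x : ℝ, P.eval x = b + a * x := by
    intro x
    rw [Polynomial.eval_eq_sum_range' hdegP]
    simp [Finset.sum_range_succ]
    rfl
  -- choice of R
  obtain ⟨M, hM⟩ := (hfin.image enorm2).bddAbove
  set R : ℝ := max (M + 1) (max 1 ((|b| + 1) / |a|)) with hR_def
  have hR1 : (1:ℝ) ≤ R := le_max_of_le_right (le_max_left _ _)
  have hRpos : (0:ℝ) < R := by linarith
  have hzR : ∀ p : ℝ × ℝ, gradf f p = 0 → enorm2 p < R := by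
    intro p hp
    have h1 : enorm2 p ≤ M := hM ⟨p, hp, rfl⟩
    have h2 : M + 1 ≤ R := le_max_left _ _
    linarith
  have hab : a ≠ 0 → |b| < |a| * R := by
    intro ha0
    have h1 : (|b| + 1) / |a| ≤ R := le_max_of_le_right (le_max_right _ _)
    have h2 : (0:ℝ) < |a| := abs_pos.mpr ha0
    have h3 := (div_le_iff₀ h2).mp h1
    nlinarith
  -- the gradient curve on the circle of radius R
  set g1 : ℝ → ℝ := fun t => P.eval (R * Real.cos (2 * Real.pi * t)) with hg1_def
  set g2 : ℝ → ℝ := fun t => Q.eval (R * Real.sin (2 * Real.pi * t)) with hg2_def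
  set g1' : ℝ → ℝ := fun t =>
    Polynomial.eval (R * Real.cos (2 * Real.pi * t)) (Polynomial.derivative P) *
      (R * (-Real.sin (2 * Real.pi * t) * (2 * Real.pi))) with hg1'_def
  set g2' : ℝ → ℝ := fun t =>
    Polynomial.eval (R * Real.sin (2 * Real.pi * t)) (Polynomial.derivative Q) *
      (R * (Real.cos (2 * Real.pi * t) * (2 * Real.pi))) with hg2'_def
  have hlin : ∀ t : ℝ, HasDerivAt (fun s : ℝ => 2 * Real.pi * s) (2 * Real.pi) t := by
    intro t
    simpa using (hasDerivAt_id t).const_mul (2 * Real.pi)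
  have hd1 : ∀ t, HasDerivAt g1 (g1' t) t := by
    intro t
    have hin : HasDerivAt (fun s : ℝ => R * Real.cos (2 * Real.pi * s))
        (R * (-Real.sin (2 * Real.pi * t) * (2 * Real.pi))) t :=
      ((Real.hasDerivAt_cos _).comp t (hlin t)).const_mul R
    exact (P.hasDerivAt _).comp t hin
  have hd2 : ∀ t, HasDerivAt g2 (g2' t) t := by
    intro t
    have hin : HasDerivAt (fun s : ℝ => R * Real.sin (2 * Real.pi * s))
        (R * (Real.cos (2 * Real.pi * t) * (2 * Real.pi))) t :=
      ((Real.hasDerivAt_sin _).comp t (hlin t)).const_mul R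
    exact (Q.hasDerivAt _).comp t hin
  have hc1 : Continuous g1' := by
    apply Continuous.mul
    · exact (Polynomial.derivative P).continuous.comp (by fun_prop)
    · fun_prop
  have hc2 : Continuous g2' := by
    apply Continuous.mul
    · exact (Polynomial.derivative Q).continuous.comp (by fun_prop)
    · fun_prop
  have hnormpt : ∀ t : ℝ,
      enorm2 (R * Real.cos (2 * Real.pi * t), R * Real.sin (2 * Real.pi * t)) = R := by
    intro t
    show Real.sqrt ((R * Real.cos (2 * Real.pi * t)) ^ 2 +
      (R * Real.sin (2 * Real.pi * t)) ^ 2) = R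
    rw [show (R * Real.cos (2 * Real.pi * t)) ^ 2 + (R * Real.sin (2 * Real.pi * t)) ^ 2
        = R ^ 2 * (Real.sin (2 * Real.pi * t) ^ 2 + Real.cos (2 * Real.pi * t) ^ 2) by ring,
      Real.sin_sq_add_cos_sq, mul_one, Real.sqrt_sq hRpos.le]
  have hgpt : ∀ t : ℝ,
      gradf f (R * Real.cos (2 * Real.pi * t), R * Real.sin (2 * Real.pi * t)) = (g1 t, g2 t) := by
    intro t
    rw [grad_eq]
  have hnz : ∀ t : ℝ, g1 t ^ 2 + g2 t ^ 2 ≠ 0 := by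
    intro t h0
    obtain ⟨e1, e2⟩ := (add_eq_zero_iff_of_nonneg (sq_nonneg _) (sq_nonneg _)).mp h0
    have hz1 : g1 t = 0 := pow_eq_zero_iff two_ne_zero |>.mp e1
    have hz2 : g2 t = 0 := pow_eq_zero_iff two_ne_zero |>.mp e2
    have hgrad : gradf f (R * Real.cos (2 * Real.pi * t), R * Real.sin (2 * Real.pi * t)) = 0 := by
      rw [hgpt t, hz1, hz2]
      rfl
    have := hzR _ hgrad
    rw [hnormpt t] at this
    exact lt_irrefl _ this
  have hspos : ∀ t : ℝ, 0 < g1 t ^ 2 + g2 t ^ 2 :=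
    fun t => lt_of_le_of_ne (by positivity) (Ne.symm (hnz t))
  -- the angle lift
  obtain ⟨θ, hθc, hθlift⟩ := exists_lift g1 g2 g1' g2' hd1 hd2 hc1 hc2 hnz
  have hρpos : ∀ t : ℝ, 0 < Real.sqrt (g1 t ^ 2 + g2 t ^ 2) :=
    fun t => Real.sqrt_pos.mpr (hspos t)
  have heq : θ 1 - θ 0 = 2 * Real.pi * n := by
    apply hn R hRpos hzR θ hθc.continuousOn
    intro t _
    rw [hgpt t]
    have h1 := (hθlift t).1
    have h2 := (hθlift t).2
    have hnorm : enorm2 (g1 t, g2 t) = Real.sqrt (g1 t ^ 2 + g2 t ^ 2) := rfl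
    rw [Prod.ext_iff]
    constructor
    · show g1 t = (enorm2 (g1 t, g2 t)) • Real.cos (θ t)
      rw [hnorm, smul_eq_mul]
      exact h1
    · show g2 t = (enorm2 (g1 t, g2 t)) • Real.sin (θ t)
      rw [hnorm, smul_eq_mul]
      exact h2
  have hcosθ : ∀ t : ℝ, Real.cos (θ t) = g1 t / Real.sqrt (g1 t ^ 2 + g2 t ^ 2) := by
    intro t
    rw [eq_div_iff (hρpos t).ne']
    linear_combination -(hθlift t).1
  have hkcos : ∀ (k : ℝ) (τ : ℝ), 0 ≤ k * g1 τ → 0 ≤ k * Real.cos (θ τ) := by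
    intro k τ h
    rw [hcosθ τ, mul_div_assoc']
    exact div_nonneg h (Real.sqrt_nonneg _)
  -- the key bound on the angle variation
  have key : |θ 1 - θ 0| ≤ 3 * Real.pi := by
    by_cases ha0 : a = 0
    · -- constant first component
      have hb0 : b ≠ 0 := by
        intro hb0
        apply hv'
        have hPle : P.natDegree ≤ 1 := by omega
        have := Polynomial.eq_X_add_C_of_natDegree_le_one hPle
        rw [← ha_def, ← hb_def, ha0, hb0] at this
        simpa using this
      have hbound := angle_var_le_pi (by norm_num : (0:ℝ) ≤ 1) hθc.continuousOn hb0
        (fun τ _ => by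
          apply hkcos
          have hg : g1 τ = b := by
            have := heval (R * Real.cos (2 * Real.pi * τ))
            rw [ha0] at this
            simpa using this
          rw [hg]
          exact mul_self_nonneg b)
      linarith
    · -- genuinely linear first component
      set c : ℝ := -b / (a * R) with hc_def
      have haR : a * R ≠ 0 := mul_ne_zero ha0 hRpos.ne'
      have hcabs : |c| < 1 := by
        rw [hc_def, abs_div, abs_neg, abs_mul, abs_of_pos hRpos,
          div_lt_one (by positivity)]
        exact hab ha0
      have hc1' : -1 ≤ c := by linarith [(abs_lt.mp hcabs).1]
      have hc2' : c ≤ 1 := by linarith [(abs_lt.mp hcabs).2]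
      have hbar : b + a * R * c = 0 := by
        have h' : a * R * c = -b := by rw [hc_def, mul_comm, div_mul_cancel₀ _ haR]
        linarith
      set t1 : ℝ := Real.arccos c / (2 * Real.pi) with ht1_def
      have h2πt1 : 2 * Real.pi * t1 = Real.arccos c := by
        rw [ht1_def]
        field_simp
      have ht1pos : 0 < t1 :=
        div_pos (Real.arccos_pos.mpr (lt_of_abs_lt hcabs)) (by positivity)
      have ht1half : t1 ≤ 1 / 2 := by
        rw [ht1_def, div_le_iff₀ (by positivity)]
        have := Real.arccos_le_pi c
        linarith
      set t2 : ℝ := 1 - t1 with ht2_def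
      -- cosine comparisons on the three arcs
      have hcosA : ∀ t ∈ Set.Icc (0:ℝ) t1, c ≤ Real.cos (2 * Real.pi * t) := by
        intro t ht
        have h0 : 0 ≤ 2 * Real.pi * t := by nlinarith [ht.1]
        have h1 : 2 * Real.pi * t ≤ Real.arccos c := by
          rw [← h2πt1]
          nlinarith [ht.2]
        calc c = Real.cos (Real.arccos c) := (Real.cos_arccos hc1' hc2').symm
          _ ≤ Real.cos (2 * Real.pi * t) :=
            Real.cos_le_cos_of_nonneg_of_le_pi h0 (Real.arccos_le_pi c) h1
      have hcosB : ∀ t ∈ Set.Icc t1 t2, Real.cos (2 * Real.pi * t) ≤ c := by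
        intro t ht
        have hta : Real.arccos c ≤ 2 * Real.pi * t := by
          rw [← h2πt1]
          nlinarith [ht.1]
        have htb : 2 * Real.pi * t ≤ 2 * Real.pi - Real.arccos c := by
          rw [← h2πt1]
          have := ht.2
          rw [ht2_def] at this
          nlinarith
        rcases le_total (2 * Real.pi * t) Real.pi with hle | hge
        · have h := Real.cos_le_cos_of_nonneg_of_le_pi (Real.arccos_nonneg c) hle hta
          rwa [Real.cos_arccos hc1' hc2'] at h
        · rw [← Real.cos_two_pi_sub]
          have h := Real.cos_le_cos_of_nonneg_of_le_pi (x := Real.arccos c)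
            (y := 2 * Real.pi - 2 * Real.pi * t) (Real.arccos_nonneg c)
            (by linarith) (by linarith)
          rwa [Real.cos_arccos hc1' hc2'] at h
      have hcosC : ∀ t ∈ Set.Icc t2 (1:ℝ), c ≤ Real.cos (2 * Real.pi * t) := by
        intro t ht
        have hta : 2 * Real.pi - 2 * Real.pi * t ≤ Real.arccos c := by
          rw [← h2πt1]
          have := ht.1
          rw [ht2_def] at this
          nlinarith
        have htb : 0 ≤ 2 * Real.pi - 2 * Real.pi * t := by nlinarith [ht.2]
        rw [← Real.cos_two_pi_sub]
        calc c = Real.cos (Real.arccos c) := (Real.cos_arccos hc1' hc2').symm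
          _ ≤ Real.cos (2 * Real.pi - 2 * Real.pi * t) :=
            Real.cos_le_cos_of_nonneg_of_le_pi htb (Real.arccos_le_pi c) hta
      -- sign of a * g1 on the arcs
      have hsignpos : ∀ t : ℝ, c ≤ Real.cos (2 * Real.pi * t) → 0 ≤ a * g1 t := by
        intro t hct
        have hg : g1 t = b + a * (R * Real.cos (2 * Real.pi * t)) :=
          heval (R * Real.cos (2 * Real.pi * t))
        have hmm : 0 ≤ a ^ 2 * R * (Real.cos (2 * Real.pi * t) - c) :=
          mul_nonneg (by positivity) (by linarith)
        have hid : a * g1 t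
            = a ^ 2 * R * (Real.cos (2 * Real.pi * t) - c) + a * (b + a * R * c) := by
          rw [hg]; ring
        rw [hid, hbar]
        simpa using hmm
      have hsignneg : ∀ t : ℝ, Real.cos (2 * Real.pi * t) ≤ c → 0 ≤ -a * g1 t := by
        intro t hct
        have hg : g1 t = b + a * (R * Real.cos (2 * Real.pi * t)) :=
          heval (R * Real.cos (2 * Real.pi * t))
        have hmm : 0 ≤ a ^ 2 * R * (c - Real.cos (2 * Real.pi * t)) :=
          mul_nonneg (by positivity) (by linarith)
        have hid : -a * g1 t
            = a ^ 2 * R * (c - Real.cos (2 * Real.pi * t)) + (-a) * (b + a * R * c) := by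
          rw [hg]; ring
        rw [hid, hbar]
        simpa using hmm
      -- transfer to cos θ
      have hkA : ∀ τ ∈ Set.Icc (0:ℝ) t1, 0 ≤ a * Real.cos (θ τ) :=
        fun τ hτ => hkcos a τ (hsignpos τ (hcosA τ hτ))
      have hkB : ∀ τ ∈ Set.Icc t1 t2, 0 ≤ -a * Real.cos (θ τ) :=
        fun τ hτ => hkcos (-a) τ (hsignneg τ (hcosB τ hτ))
      have hkC : ∀ τ ∈ Set.Icc t2 (1:ℝ), 0 ≤ a * Real.cos (θ τ) :=
        fun τ hτ => hkcos a τ (hsignpos τ (hcosC τ hτ))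
      have A1 := angle_var_le_pi ht1pos.le hθc.continuousOn ha0 hkA
      have A2 := angle_var_le_pi (by rw [ht2_def]; linarith : t1 ≤ t2) hθc.continuousOn
        (neg_ne_zero.mpr ha0) hkB
      have A3 := angle_var_le_pi (by rw [ht2_def]; linarith : t2 ≤ 1) hθc.continuousOn ha0 hkC
      have habs : |θ 1 - θ 0| = |(θ 1 - θ t2) + (θ t2 - θ t1) + (θ t1 - θ 0)| := by
        congr 1
        ring
      rw [habs]
      calc |(θ 1 - θ t2) + (θ t2 - θ t1) + (θ t1 - θ 0)|
          ≤ |θ 1 - θ t2| + |θ t2 - θ t1| + |θ t1 - θ 0| := abs_add_three _ _ _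
        _ ≤ 3 * Real.pi := by linarith [A1, A2, A3]
  -- conclude
  have h2 : 2 * Real.pi * |(n:ℝ)| ≤ 3 * Real.pi := by
    rw [heq] at key
    rwa [abs_mul, abs_of_pos (by positivity : (0:ℝ) < 2 * Real.pi)] at key
  have h3 : |(n:ℝ)| < 2 := by nlinarith
  have h4 : ((|n| : ℤ) : ℝ) < 2 := by rwa [Int.cast_abs]
  have h5 : |n| < 2 := by exact_mod_cast h4
  omega

end Aux

/-- for `f(x,y) = v(x) + u(y)` with `deg u = d ≥ 3`, `deg v ≤ 2` and `v' ≠ 0`,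
the gradient has finitely many zeros and `ind_∞(f) ∈ {-1, 0, 1}`. -/


theorem stmt_15 (u v : Polynomial ℝ) (d : ℕ) (hd : 3 ≤ d) (hu : u.natDegree = d)
    (hv : v.natDegree ≤ 2) (hv' : Polynomial.derivative v ≠ 0) :
    {p : ℝ × ℝ | gradf (Polynomial.aeval (X 0 : MvPolynomial (Fin 2) ℝ) v +
        Polynomial.aeval (X 1 : MvPolynomial (Fin 2) ℝ) u) p = 0}.Finite ∧
    ∀ n : ℤ, IsIndexAtInfinity (Polynomial.aeval (X 0 : MvPolynomial (Fin 2) ℝ) v +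
        Polynomial.aeval (X 1 : MvPolynomial (Fin 2) ℝ) u) n → |n| ≤ 1 := by
  exact stmt15_aux_main u v d hd hu hv hv'
end
end
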